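/- arXiv:2212.05675 — 10 statements merged into one kernel-verified Lean document; each statement's English description precedes it below -/
import Mathlib

section
/- Along any differentiable solution of the strong Onsager gradient flow on a finite weighted graph, the free energy D_φ(p‖π) is nonincreasing, with the explicit dissipation identity: if p : I → (0,∞)^n is differentiable on an interval I and satisfies for every i and every t ∈ I the equation dp_i/dt = ∑_{j≠i} ω_{ij} θ_{ij}(p_t) ( φ'(p_t(j)/π_j) − φ'(p_t(i)/π_i) ), then for every t ∈ I, (d/dt) D_φ(p_t‖π) = −(1/2) ∑_{i≠j} ω_{ij} θ_{ij}(p_t) ( φ'(p_t(i)/π_i) − φ'(p_t(j)/π_j) )² ≤ 0. -/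
open Finset

lemma swap_sum_ne {n : ℕ} (F : Fin n → Fin n → ℝ) :
    ∑ i, ∑ j ∈ Finset.univ.filter (fun j => j ≠ i), F i j
      = ∑ i, ∑ j ∈ Finset.univ.filter (fun j => j ≠ i), F j i := by
  rw [Finset.sum_comm' (s' := fun j => Finset.univ.filter (fun i => i ≠ j))
    (t' := Finset.univ)]
  intro x y
  simp only [Finset.mem_univ, Finset.mem_filter, true_and, and_true]
  exact ne_comm

/-- Energy dissipation identity for the strong Onsager gradient flow on a finite weighted
graph: along any differentiable positive solution, the free energy `D_φ(p‖π)` has derivative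
`-(1/2) ∑_{i≠j} ω_{ij} θ_{ij}(p) (φ'(p_i/π_i) - φ'(p_j/π_j))² ≤ 0`. -/
theorem onsager_gradient_flow_energy_dissipation
    (n : ℕ) (ω : Fin n → Fin n → ℝ) (π : Fin n → ℝ) (φ φ' : ℝ → ℝ)
    (θ : ℝ → ℝ → ℝ) (I : Set ℝ) (p : ℝ → Fin n → ℝ)
    (hωsym : ∀ i j, ω i j = ω j i)
    (hωnonneg : ∀ i j, i ≠ j → 0 ≤ ω i j)
    (hπ : ∀ i, 0 < π i)
    (hφ : ∀ x : ℝ, 0 < x → HasDerivAt φ (φ' x) x)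
    (hφconv : ConvexOn ℝ (Set.Ioi (0 : ℝ)) φ)
    (hθcont : ContinuousOn (fun q : ℝ × ℝ => θ q.1 q.2) (Set.Ioi 0 ×ˢ Set.Ioi 0))
    (hθsym : ∀ x y, θ x y = θ y x)
    (hθnonneg : ∀ x y, 0 < x → 0 < y → 0 ≤ θ x y)
    (hppos : ∀ t ∈ I, ∀ i, 0 < p t i)
    (hODE : ∀ t ∈ I, ∀ i, HasDerivAt (fun s => p s i)
      (∑ j ∈ Finset.univ.filter (fun j => j ≠ i),
        ω i j * θ (p t i / π i) (p t j / π j) *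
          (φ' (p t j / π j) - φ' (p t i / π i))) t) :
    ∀ t ∈ I,
      HasDerivAt (fun s => ∑ i, π i * φ (p s i / π i))
        (-(1/2) * ∑ i, ∑ j ∈ Finset.univ.filter (fun j => j ≠ i),
          ω i j * θ (p t i / π i) (p t j / π j) *
            (φ' (p t i / π i) - φ' (p t j / π j)) ^ 2) t ∧
      -(1/2) * ∑ i, ∑ j ∈ Finset.univ.filter (fun j => j ≠ i),
          ω i j * θ (p t i / π i) (p t j / π j) *
            (φ' (p t i / π i) - φ' (p t j / π j)) ^ 2 ≤ 0 := by
  intro t ht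
  set g : Fin n → ℝ := fun i => φ' (p t i / π i) with hg
  set A : Fin n → Fin n → ℝ := fun i j => ω i j * θ (p t i / π i) (p t j / π j) with hA
  have hAsym : ∀ i j, A i j = A j i := by
    intro i j; simp only [hA]; rw [hωsym, hθsym]
  -- the dissipation sum
  set Dsum : ℝ := ∑ i, ∑ j ∈ Finset.univ.filter (fun j => j ≠ i),
      A i j * (g i - g j) ^ 2 with hD
  constructor
  · -- derivative of each summand
    have hderiv : ∀ i : Fin n, HasDerivAt (fun s => π i * φ (p s i / π i))
        (g i * ∑ j ∈ Finset.univ.filter (fun j => j ≠ i),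
          A i j * (g j - g i)) t := by
      intro i
      have h1 : HasDerivAt (fun s => p s i / π i)
          ((∑ j ∈ Finset.univ.filter (fun j => j ≠ i), A i j * (g j - g i)) / π i) t :=
        (hODE t ht i).div_const _
      have h2 : HasDerivAt φ (g i) (p t i / π i) :=
        hφ _ (div_pos (hppos t ht i) (hπ i))
      have h3 := (h2.comp t h1).const_mul (π i)
      refine h3.congr_deriv ?_
      rw [mul_left_comm, mul_div_cancel₀ _ (hπ i).ne']
    have hsum := HasDerivAt.fun_sum (u := Finset.univ) (fun i _ => hderiv i)
    refine hsum.congr_deriv ?_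
    -- algebraic identity
    have key : ∑ i, g i * ∑ j ∈ Finset.univ.filter (fun j => j ≠ i), A i j * (g j - g i)
        = -(1/2) * Dsum := by
      have e1 : ∑ i, g i * ∑ j ∈ Finset.univ.filter (fun j => j ≠ i), A i j * (g j - g i)
          = ∑ i, ∑ j ∈ Finset.univ.filter (fun j => j ≠ i), A i j * g i * (g j - g i) := by
        refine Finset.sum_congr rfl fun i _ => ?_
        rw [Finset.mul_sum]
        exact Finset.sum_congr rfl fun j _ => by ring
      have e2 : ∑ i, ∑ j ∈ Finset.univ.filter (fun j => j ≠ i), A i j * g i * (g j - g i)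
          = ∑ i, ∑ j ∈ Finset.univ.filter (fun j => j ≠ i), A i j * g j * (g i - g j) := by
        rw [swap_sum_ne (fun i j => A i j * g i * (g j - g i))]
        refine Finset.sum_congr rfl fun i _ => Finset.sum_congr rfl fun j _ => ?_
        rw [hAsym j i]
      have e3 : (2 : ℝ) * ∑ i, ∑ j ∈ Finset.univ.filter (fun j => j ≠ i),
            A i j * g i * (g j - g i) = -Dsum := by
        rw [two_mul]
        nth_rewrite 2 [e2]
        rw [hD, ← Finset.sum_add_distrib, ← Finset.sum_neg_distrib]
        refine Finset.sum_congr rfl fun i _ => ?_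
        rw [← Finset.sum_add_distrib, ← Finset.sum_neg_distrib]
        exact Finset.sum_congr rfl fun j _ => by ring
      rw [e1]
      linarith [e3]
    rw [key]
  · -- nonnegativity
    have : 0 ≤ Dsum := by
      refine Finset.sum_nonneg fun i _ => Finset.sum_nonneg fun j hj => ?_
      simp only [Finset.mem_filter] at hj
      have hω := hωnonneg i j (Ne.symm hj.2)
      have hθ := hθnonneg _ _ (div_pos (hppos t ht i) (hπ i)) (div_pos (hppos t ht j) (hπ j))
      positivity
    linarith
end

section
/- Along any differentiable solution of the generalized gradient flow on a finite weighted graph, the free energy D_φ(p‖π) is nonincreasing: if p : I → (0,∞)^n is differentiable on an interval I and satisfies for every i and every t ∈ I the equation dp_i/dt = −∑_{j≠i} ω_{ij} θ_{ij}(p_t) (ψ*)'( φ'(p_t(i)/π_i) − φ'(p_t(j)/π_j) ), then for every t ∈ I, (d/dt) D_φ(p_t‖π) = −(1/2) ∑_{i≠j} ω_{ij} θ_{ij}(p_t) [ φ'(p_t(i)/π_i) − φ'(p_t(j)/π_j) ] (ψ*)'( φ'(p_t(i)/π_i) − φ'(p_t(j)/π_j) ) ≤ 0. -/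
open Finset

lemma GGF_swap {n : ℕ} (f : Fin n → Fin n → ℝ) :
    ∑ i, ∑ j ∈ Finset.univ.filter (fun j => j ≠ i), f i j
      = ∑ i, ∑ j ∈ Finset.univ.filter (fun j => j ≠ i), f j i := by
  rw [Finset.sum_comm' (t' := Finset.univ)
    (s' := fun j => Finset.univ.filter (fun i => i ≠ j))]
  intro x y
  simp [ne_comm]

lemma GGF_odd {ψ ψ' : ℝ → ℝ} (hψ : ∀ ξ : ℝ, HasDerivAt ψ (ψ' ξ) ξ)
    (hψeven : ∀ ξ : ℝ, ψ (-ξ) = ψ ξ) (ξ : ℝ) : ψ' (-ξ) = -ψ' ξ := by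
  have h1 : HasDerivAt (fun x : ℝ => ψ (-x)) (ψ' (-ξ) * (-1)) ξ :=
    (hψ (-ξ)).comp ξ (hasDerivAt_neg ξ)
  have h2 : (fun x : ℝ => ψ (-x)) = ψ := funext hψeven
  rw [h2] at h1
  have := h1.unique (hψ ξ)
  linarith

lemma GGF_nonneg {ψ ψ' : ℝ → ℝ} (hψ : ∀ ξ : ℝ, HasDerivAt ψ (ψ' ξ) ξ)
    (hψeven : ∀ ξ : ℝ, ψ (-ξ) = ψ ξ) (hψconv : ConvexOn ℝ Set.univ ψ)
    (hψzero : ψ 0 = 0) (ξ : ℝ) : 0 ≤ ξ * ψ' ξ := by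
  have hpos : ∀ ζ : ℝ, 0 ≤ ψ ζ := by
    intro ζ
    have := hψconv.2 (Set.mem_univ ζ) (Set.mem_univ (-ζ))
      (by norm_num : (0:ℝ) ≤ 1/2) (by norm_num : (0:ℝ) ≤ 1/2) (by norm_num)
    simp only [smul_eq_mul, hψeven] at this
    have h0 : (1/2 : ℝ) * ζ + 1/2 * -ζ = 0 := by ring
    rw [h0, hψzero] at this
    linarith
  rcases lt_trichotomy ξ 0 with h | h | h
  · have h1 := hψconv.le_slope_of_hasDerivAt (Set.mem_univ ξ) (Set.mem_univ 0) h (hψ ξ)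
    rw [slope_def_field, hψzero] at h1
    have h2 : (0 - ψ ξ) / (0 - ξ) ≤ 0 := by
      apply div_nonpos_of_nonpos_of_nonneg <;> [linarith [hpos ξ]; linarith]
    nlinarith
  · simp [h]
  · have h1 := hψconv.slope_le_of_hasDerivAt (Set.mem_univ 0) (Set.mem_univ ξ) h (hψ ξ)
    rw [slope_def_field, hψzero] at h1
    have h2 : 0 ≤ (ψ ξ - 0) / (ξ - 0) := by
      apply div_nonneg <;> linarith [hpos ξ]
    nlinarith

lemma GGF_main_eq {n : ℕ} (g : Fin n → ℝ) (A u : Fin n → Fin n → ℝ)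
    (hA : ∀ i j, A j i = A i j) (hu : ∀ i j, u j i = -u i j) :
    -(1/2) * ∑ i, ∑ j ∈ Finset.univ.filter (fun j => j ≠ i), A i j * ((g i - g j) * u i j)
      = ∑ i, g i * (-∑ j ∈ Finset.univ.filter (fun j => j ≠ i), A i j * u i j) := by
  have expand : ∑ i, ∑ j ∈ Finset.univ.filter (fun j => j ≠ i), A i j * ((g i - g j) * u i j)
      = (∑ i, ∑ j ∈ Finset.univ.filter (fun j => j ≠ i), A i j * (g i * u i j))
        - ∑ i, ∑ j ∈ Finset.univ.filter (fun j => j ≠ i), A i j * (g j * u i j) := by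
    rw [← Finset.sum_sub_distrib]
    refine Finset.sum_congr rfl fun i _ => ?_
    rw [← Finset.sum_sub_distrib]
    refine Finset.sum_congr rfl fun j _ => by ring
  have hswap : ∑ i, ∑ j ∈ Finset.univ.filter (fun j => j ≠ i), A i j * (g j * u i j)
      = -∑ i, ∑ j ∈ Finset.univ.filter (fun j => j ≠ i), A i j * (g i * u i j) := by
    rw [GGF_swap (fun i j => A i j * (g j * u i j))]
    rw [← Finset.sum_neg_distrib]
    refine Finset.sum_congr rfl fun i _ => ?_
    rw [← Finset.sum_neg_distrib]
    refine Finset.sum_congr rfl fun j _ => ?_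
    simp only [hA i j, hu i j]
    ring
  have hRHS : ∑ i, g i * (-∑ j ∈ Finset.univ.filter (fun j => j ≠ i), A i j * u i j)
      = -∑ i, ∑ j ∈ Finset.univ.filter (fun j => j ≠ i), A i j * (g i * u i j) := by
    rw [← Finset.sum_neg_distrib]
    refine Finset.sum_congr rfl fun i _ => ?_
    rw [mul_neg, Finset.mul_sum]
    congr 1
    exact Finset.sum_congr rfl fun j _ => by ring
  rw [expand, hswap, hRHS]
  ring

/-- Energy dissipation for the generalized gradient flow on a finite weighted graph: along any
differentiable positive solution of
`dp_i/dt = -∑_{j≠i} ω_{ij} θ_{ij}(p) (ψ*)'(φ'(p_i/π_i) - φ'(p_j/π_j))`,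
the free energy `D_φ(p‖π)` has derivative
`-(1/2) ∑_{i≠j} ω_{ij} θ_{ij}(p) (φ'_i - φ'_j) (ψ*)'(φ'_i - φ'_j) ≤ 0`. -/
theorem generalized_gradient_flow_energy_dissipation
    (n : ℕ) (ω : Fin n → Fin n → ℝ) (π : Fin n → ℝ) (φ φ' : ℝ → ℝ)
    (ψ ψ' : ℝ → ℝ)
    (θ : ℝ → ℝ → ℝ) (I : Set ℝ) (p : ℝ → Fin n → ℝ)
    (hωsym : ∀ i j, ω i j = ω j i)
    (hωnonneg : ∀ i j, i ≠ j → 0 ≤ ω i j)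
    (hπ : ∀ i, 0 < π i)
    (hφ : ∀ x : ℝ, 0 < x → HasDerivAt φ (φ' x) x)
    (hφconv : ConvexOn ℝ (Set.Ioi (0 : ℝ)) φ)
    (hψ : ∀ ξ : ℝ, HasDerivAt ψ (ψ' ξ) ξ)
    (hψeven : ∀ ξ : ℝ, ψ (-ξ) = ψ ξ)
    (hψconv : ConvexOn ℝ Set.univ ψ)
    (hψzero : ψ 0 = 0)
    (hθcont : ContinuousOn (fun q : ℝ × ℝ => θ q.1 q.2) (Set.Ioi 0 ×ˢ Set.Ioi 0))
    (hθsym : ∀ x y, θ x y = θ y x)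
    (hθnonneg : ∀ x y, 0 < x → 0 < y → 0 ≤ θ x y)
    (hppos : ∀ t ∈ I, ∀ i, 0 < p t i)
    (hODE : ∀ t ∈ I, ∀ i, HasDerivAt (fun s => p s i)
      (-∑ j ∈ Finset.univ.filter (fun j => j ≠ i),
        ω i j * θ (p t i / π i) (p t j / π j) *
          ψ' (φ' (p t i / π i) - φ' (p t j / π j))) t) :
    ∀ t ∈ I,
      HasDerivAt (fun s => ∑ i, π i * φ (p s i / π i))
        (-(1/2) * ∑ i, ∑ j ∈ Finset.univ.filter (fun j => j ≠ i),
          ω i j * θ (p t i / π i) (p t j / π j) *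
            ((φ' (p t i / π i) - φ' (p t j / π j)) *
              ψ' (φ' (p t i / π i) - φ' (p t j / π j)))) t ∧
      -(1/2) * ∑ i, ∑ j ∈ Finset.univ.filter (fun j => j ≠ i),
          ω i j * θ (p t i / π i) (p t j / π j) *
            ((φ' (p t i / π i) - φ' (p t j / π j)) *
              ψ' (φ' (p t i / π i) - φ' (p t j / π j))) ≤ 0 := by
  intro t ht
  have hodd := GGF_odd hψ hψeven
  have hderiv : ∀ i : Fin n, HasDerivAt (fun s => π i * φ (p s i / π i))
      (φ' (p t i / π i) * (-∑ j ∈ Finset.univ.filter (fun j => j ≠ i),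
        ω i j * θ (p t i / π i) (p t j / π j) *
          ψ' (φ' (p t i / π i) - φ' (p t j / π j)))) t := by
    intro i
    have h1 := (hODE t ht i).div_const (π i)
    have h2 := hφ _ (div_pos (hppos t ht i) (hπ i))
    have h3 := h2.comp t h1
    have h4 := h3.const_mul (π i)
    refine h4.congr_deriv ?_
    rw [mul_comm (π i), mul_assoc, div_mul_cancel₀ _ (hπ i).ne']
  have hsum := HasDerivAt.fun_sum (fun i (_ : i ∈ Finset.univ) => hderiv i)
  have heq := GGF_main_eq (fun i => φ' (p t i / π i))
      (fun i j => ω i j * θ (p t i / π i) (p t j / π j))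
      (fun i j => ψ' (φ' (p t i / π i) - φ' (p t j / π j)))
      (fun i j => show ω j i * θ (p t j / π j) (p t i / π i)
          = ω i j * θ (p t i / π i) (p t j / π j) by rw [hωsym j i, hθsym])
      (fun i j => show ψ' (φ' (p t j / π j) - φ' (p t i / π i))
          = -ψ' (φ' (p t i / π i) - φ' (p t j / π j)) by
        rw [show φ' (p t j / π j) - φ' (p t i / π i)
            = -(φ' (p t i / π i) - φ' (p t j / π j)) by ring, hodd])
  have hS : 0 ≤ ∑ i, ∑ j ∈ Finset.univ.filter (fun j => j ≠ i),
      ω i j * θ (p t i / π i) (p t j / π j) *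
        ((φ' (p t i / π i) - φ' (p t j / π j)) *
          ψ' (φ' (p t i / π i) - φ' (p t j / π j))) := by
    refine Finset.sum_nonneg fun i _ => Finset.sum_nonneg fun j hj => ?_
    have hj' : j ≠ i := by simpa using hj
    have hprod := GGF_nonneg hψ hψeven hψconv hψzero
      (φ' (p t i / π i) - φ' (p t j / π j))
    have hθ0 := hθnonneg _ _ (div_pos (hppos t ht i) (hπ i))
      (div_pos (hppos t ht j) (hπ j))
    exact mul_nonneg (mul_nonneg (hωnonneg i j hj'.symm) hθ0) hprod
  beta_reduce at heq
  constructor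
  · rw [heq]
    exact hsum
  · linarith
end

section
/- Let L : ℝ → ℝ be convex with L(0) = 0, let C ⊆ ℝ² be a convex set, and let θ : C → ℝ be concave. Then the function Λ(x, y, z) := L( x / θ(y,z) ) · θ(y,z) is convex on the convex set { (x, y, z) ∈ ℝ × C : θ(y,z) > 0 }. -/
private lemma pos_combo {la mu t1 t2 : ℝ} (hla : 0 ≤ la) (hmu : 0 ≤ mu)
    (hlm : la + mu = 1) (h1 : 0 < t1) (h2 : 0 < t2) : 0 < la * t1 + mu * t2 := by
  rcases le_total t1 t2 with h | h
  · nlinarith [mul_nonneg hmu (sub_nonneg.2 h)]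
  · nlinarith [mul_nonneg hla (sub_nonneg.2 h)]

/-- key step: perspective monotone + convex combination -/
private lemma key (L : ℝ → ℝ) (hL : ConvexOn ℝ Set.univ L) (hL0 : L 0 = 0)
    {x1 x2 t1 t2 s la mu : ℝ} (hla : 0 ≤ la) (hmu : 0 ≤ mu) (hlm : la + mu = 1)
    (ht1 : 0 < t1) (ht2 : 0 < t2) (hs : la * t1 + mu * t2 ≤ s) :
    L ((la * x1 + mu * x2) / s) * s
      ≤ la * (L (x1 / t1) * t1) + mu * (L (x2 / t2) * t2) := by
  set t : ℝ := la * t1 + mu * t2 with ht_def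
  have ht : 0 < t := pos_combo hla hmu hlm ht1 ht2
  have hspos : 0 < s := lt_of_lt_of_le ht hs
  set w : ℝ := la * x1 + mu * x2 with hw_def
  -- Step A : L (w/s) * s ≤ L (w/t) * t
  have hA : L (w / s) * s ≤ L (w / t) * t := by
    have hcoef : (0:ℝ) ≤ t / s := div_nonneg ht.le hspos.le
    have hcoef' : (0:ℝ) ≤ 1 - t / s := by
      have : t / s ≤ 1 := (div_le_one hspos).2 hs
      linarith
    have h1 : w / s = (t / s) * (w / t) + (1 - t / s) * 0 := by
      field_simp
      ring
    have h2 := hL.2 (Set.mem_univ (w / t)) (Set.mem_univ (0:ℝ)) hcoef hcoef' (by ring)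
    simp only [smul_eq_mul] at h2
    rw [h1] at *
    have h3 : L ((t / s) * (w / t) + (1 - t / s) * 0) ≤ (t / s) * L (w / t) := by
      calc L ((t / s) * (w / t) + (1 - t / s) * 0)
          ≤ (t / s) * L (w / t) + (1 - t / s) * L 0 := h2
        _ = (t / s) * L (w / t) := by rw [hL0]; ring
    have h4 := mul_le_mul_of_nonneg_right h3 hspos.le
    calc L ((t / s) * (w / t) + (1 - t / s) * 0) * s
        ≤ (t / s) * L (w / t) * s := h4
      _ = L (w / t) * t := by field_simp
  -- Step B : L (w/t) * t ≤ la * (L (x1/t1) * t1) + mu * (L (x2/t2) * t2)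
  have hB : L (w / t) * t ≤ la * (L (x1 / t1) * t1) + mu * (L (x2 / t2) * t2) := by
    set a : ℝ := la * t1 / t with ha_def
    set b : ℝ := mu * t2 / t with hb_def
    have hanon : 0 ≤ a := div_nonneg (mul_nonneg hla ht1.le) ht.le
    have hbnon : 0 ≤ b := div_nonneg (mul_nonneg hmu ht2.le) ht.le
    have hab : a + b = 1 := by
      rw [ha_def, hb_def]
      field_simp
      exact ht_def.symm
    have hw : w / t = a * (x1 / t1) + b * (x2 / t2) := by
      rw [ha_def, hb_def, hw_def]
      field_simp
    have h2 := hL.2 (Set.mem_univ (x1 / t1)) (Set.mem_univ (x2 / t2)) hanon hbnon hab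
    simp only [smul_eq_mul] at h2
    rw [hw]
    have h4 := mul_le_mul_of_nonneg_right h2 ht.le
    calc L (a * (x1 / t1) + b * (x2 / t2)) * t
        ≤ (a * L (x1 / t1) + b * L (x2 / t2)) * t := h4
      _ = la * (L (x1 / t1) * t1) + mu * (L (x2 / t2) * t2) := by
          rw [ha_def, hb_def]; field_simp
  linarith

/-- If `L : ℝ → ℝ` is convex with `L 0 = 0`, `C ⊆ ℝ²` is convex and `θ : C → ℝ` is concave,
then `Λ(x, y, z) = L(x / θ(y,z)) * θ(y,z)` is convex on `{(x,y,z) : (y,z) ∈ C, θ(y,z) > 0}`. -/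
theorem perspective_like_function_convex
    (L : ℝ → ℝ) (C : Set (ℝ × ℝ)) (θ : ℝ × ℝ → ℝ)
    (hL : ConvexOn ℝ Set.univ L) (hL0 : L 0 = 0)
    (hC : Convex ℝ C) (hθ : ConcaveOn ℝ C θ) :
    ConvexOn ℝ {q : ℝ × ℝ × ℝ | q.2 ∈ C ∧ 0 < θ q.2}
      (fun q : ℝ × ℝ × ℝ => L (q.1 / θ q.2) * θ q.2) := by
  constructor
  · intro q1 hq1 q2 hq2 la mu hla hmu hlm
    obtain ⟨h1C, h1pos⟩ := hq1
    obtain ⟨h2C, h2pos⟩ := hq2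
    have hsnd : (la • q1 + mu • q2).2 = la • q1.2 + mu • q2.2 := rfl
    constructor
    · rw [hsnd]; exact hC h1C h2C hla hmu hlm
    · rw [hsnd]
      have hcomb := hθ.2 h1C h2C hla hmu hlm
      simp only [smul_eq_mul] at hcomb
      exact lt_of_lt_of_le (pos_combo hla hmu hlm h1pos h2pos) hcomb
  · intro q1 hq1 q2 hq2 la mu hla hmu hlm
    obtain ⟨h1C, h1pos⟩ := hq1
    obtain ⟨h2C, h2pos⟩ := hq2
    have hfst : (la • q1 + mu • q2).1 = la * q1.1 + mu * q2.1 := rfl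
    have hsnd : (la • q1 + mu • q2).2 = la • q1.2 + mu • q2.2 := rfl
    simp only [smul_eq_mul, hfst, hsnd]
    have hcomb := hθ.2 h1C h2C hla hmu hlm
    simp only [smul_eq_mul] at hcomb
    exact key L hL hL0 hla hmu hlm h1pos h2pos hcomb
end

section
/- The instantaneous payoff of the density–flux reformulation of the discrete potential mean field game is concave: under the stated assumptions, the function (p, m) ↦ −(1/2) ∑_{(i,j)∈E} θ_{ij}(p) L_{ij}( m_{ij} / θ_{ij}(p) ) + ℱ(p) is concave on the convex set of pairs (p, m) with p ∈ ℝ^n satisfying θ_{ij}(p) > 0 for all (i,j) ∈ E and m : E → ℝ antisymmetric (m_{ij} = −m_{ji}). -/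
open Finset

lemma perspective_key {L : ℝ → ℝ} (hL : ConvexOn ℝ Set.univ L) (hL0 : L 0 = 0)
    {t₁ t₂ t x₁ x₂ a b : ℝ} (ht₁ : 0 < t₁) (ht₂ : 0 < t₂)
    (ha : 0 ≤ a) (hb : 0 ≤ b) (hab : a + b = 1) (ht : a * t₁ + b * t₂ ≤ t) :
    t * L ((a * x₁ + b * x₂) / t) ≤ a * (t₁ * L (x₁ / t₁)) + b * (t₂ * L (x₂ / t₂)) := by
  set s := a * t₁ + b * t₂ with hs_def
  have hs : 0 < s := by
    rcases lt_or_eq_of_le ha with h | h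
    · nlinarith
    · have hb1 : b = 1 := by linarith
      simp [hs_def, ← h, hb1]; linarith
  have htpos : 0 < t := lt_of_lt_of_le hs ht
  set x := a * x₁ + b * x₂ with hx_def
  have h1 : L (x / s) ≤ (a*t₁/s) * L (x₁/t₁) + (b*t₂/s) * L (x₂/t₂) := by
    have key := hL.2 (Set.mem_univ (x₁/t₁)) (Set.mem_univ (x₂/t₂))
      (div_nonneg (mul_nonneg ha ht₁.le) hs.le)
      (div_nonneg (mul_nonneg hb ht₂.le) hs.le)
      (by field_simp; exact hs_def.symm)
    rw [smul_eq_mul, smul_eq_mul] at key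
    have hx : (a*t₁/s) * (x₁/t₁) + (b*t₂/s) * (x₂/t₂) = x / s := by
      field_simp [hx_def]; ring
    rwa [hx] at key
  have h2 : t * L (x / t) ≤ s * L (x / s) := by
    have hst : s / t ≤ 1 := (div_le_one htpos).mpr ht
    have key : L ((s/t) • (x/s) + (1 - s/t) • (0:ℝ)) ≤ (s/t) * L (x/s) + (1 - s/t) * L 0 :=
      hL.2 (Set.mem_univ (x/s)) (Set.mem_univ (0:ℝ))
        (div_nonneg hs.le htpos.le) (by linarith) (by ring)
    rw [smul_eq_mul, smul_eq_mul, mul_zero, add_zero, hL0, mul_zero, add_zero] at key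
    have hx2 : s/t * (x/s) = x/t := by
      field_simp
    rw [hx2] at key
    calc t * L (x/t) ≤ t * (s/t * L (x/s)) := by
          exact mul_le_mul_of_nonneg_left key htpos.le
      _ = s * L (x/s) := by field_simp
  calc t * L (x/t) ≤ s * L (x/s) := h2
    _ ≤ s * ((a*t₁/s) * L (x₁/t₁) + (b*t₂/s) * L (x₂/t₂)) :=
        mul_le_mul_of_nonneg_left h1 hs.le
    _ = a * (t₁ * L (x₁/t₁)) + b * (t₂ * L (x₂/t₂)) := by field_simp

/-- The instantaneous payoff of the density–flux reformulation of the discrete potential mean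
field game, `(p, m) ↦ -(1/2) ∑_{(i,j)∈E} θ_{ij}(p) L_{ij}(m_{ij}/θ_{ij}(p)) + ℱ(p)`, is concave
on the convex set of pairs `(p, m)` with `θ_{ij}(p) > 0` on edges and `m` antisymmetric. -/
theorem density_flux_payoff_concave
    (n : ℕ) (ω : Fin n → Fin n → ℝ)
    (L : Fin n → Fin n → ℝ → ℝ)
    (θ : Fin n → Fin n → (Fin n → ℝ) → ℝ)
    (F : (Fin n → ℝ) → ℝ)
    (hωsym : ∀ i j, ω i j = ω j i)
    (hωnonneg : ∀ i j, i ≠ j → 0 ≤ ω i j)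
    (hLconv : ∀ i j, ConvexOn ℝ Set.univ (L i j))
    (hL0 : ∀ i j, L i j 0 = 0)
    (hLsym : ∀ i j, L i j = L j i)
    (hθconc : ∀ i j, ConcaveOn ℝ Set.univ (θ i j))
    (hθsym : ∀ i j, θ i j = θ j i)
    (hFconc : ConcaveOn ℝ Set.univ F) :
    ConcaveOn ℝ
      {pm : (Fin n → ℝ) × (Fin n → Fin n → ℝ) |
        (∀ i j, j ≠ i → 0 < ω i j → 0 < θ i j pm.1) ∧
        (∀ i j, j ≠ i → 0 < ω i j → pm.2 i j = -pm.2 j i)}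
      (fun pm =>
        -(1/2) * ∑ i, ∑ j ∈ Finset.univ.filter (fun j => j ≠ i ∧ 0 < ω i j),
          θ i j pm.1 * L i j (pm.2 i j / θ i j pm.1) + F pm.1) := by
  constructor
  · -- convexity of the set
    intro x hx y hy a b ha hb hab
    obtain ⟨hx1, hx2⟩ := hx
    obtain ⟨hy1, hy2⟩ := hy
    constructor
    · intro i j hji hω
      have h1 := hx1 i j hji hω
      have h2 := hy1 i j hji hω
      have hθ := (hθconc i j).2 (Set.mem_univ x.1) (Set.mem_univ y.1) ha hb hab
      have hpos : 0 < a • θ i j x.1 + b • θ i j y.1 := by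
        rw [smul_eq_mul, smul_eq_mul]
        rcases lt_or_eq_of_le ha with h | h
        · nlinarith
        · have hb1 : b = 1 := by linarith
          rw [← h, hb1]; linarith
      have : (a • x + b • y).1 = a • x.1 + b • y.1 := rfl
      rw [this]
      exact lt_of_lt_of_le hpos hθ
    · intro i j hji hω
      have h1 := hx2 i j hji hω
      have h2 := hy2 i j hji hω
      show a • x.2 i j + b • y.2 i j = -(a • x.2 j i + b • y.2 j i)
      rw [smul_eq_mul, smul_eq_mul, smul_eq_mul, smul_eq_mul, h1, h2]  -- careful
      ring
  · intro x hx y hy a b ha hb hab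
    obtain ⟨hx1, hx2⟩ := hx
    obtain ⟨hy1, hy2⟩ := hy
    simp only [smul_eq_mul]
    have hp1 : (a • x + b • y).1 = fun k => a * x.1 k + b * y.1 k := rfl
    have hF := hFconc.2 (Set.mem_univ x.1) (Set.mem_univ y.1) ha hb hab
    rw [smul_eq_mul, smul_eq_mul] at hF
    have hsum : ∑ i, ∑ j ∈ Finset.univ.filter (fun j => j ≠ i ∧ 0 < ω i j),
          θ i j (a • x + b • y).1 * L i j ((a • x + b • y).2 i j / θ i j (a • x + b • y).1)
        ≤ a * ∑ i, ∑ j ∈ Finset.univ.filter (fun j => j ≠ i ∧ 0 < ω i j),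
            θ i j x.1 * L i j (x.2 i j / θ i j x.1)
          + b * ∑ i, ∑ j ∈ Finset.univ.filter (fun j => j ≠ i ∧ 0 < ω i j),
            θ i j y.1 * L i j (y.2 i j / θ i j y.1) := by
      rw [Finset.mul_sum, Finset.mul_sum, ← Finset.sum_add_distrib]
      apply Finset.sum_le_sum
      intro i _
      rw [Finset.mul_sum, Finset.mul_sum, ← Finset.sum_add_distrib]
      apply Finset.sum_le_sum
      intro j hj
      simp only [Finset.mem_filter] at hj
      obtain ⟨-, hji, hω⟩ := hj
      have ht₁ := hx1 i j hji hω
      have ht₂ := hy1 i j hji hω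
      have hθ := (hθconc i j).2 (Set.mem_univ x.1) (Set.mem_univ y.1) ha hb hab
      rw [smul_eq_mul, smul_eq_mul] at hθ
      have hm : (a • x + b • y).2 i j = a * x.2 i j + b * y.2 i j := rfl
      have hp : (a • x + b • y).1 = a • x.1 + b • y.1 := rfl
      rw [hm, hp]
      exact perspective_key (hLconv i j) (hL0 i j) ht₁ ht₂ ha hb hab hθ
    have hp : (a • x + b • y).1 = a • x.1 + b • y.1 := rfl
    rw [← hp] at hF
    linarith
end

section
/- The discrete mean field game Hamiltonian 𝓗(p, Φ) := (1/2) ∑_{(i,j)∈E} H_{ij}( √(ω_{ij}) (Φ_j − Φ_i) ) θ_{ij}(p) + ℱ(p) has the following partial derivatives: for every i, (∂/∂Φ_i) 𝓗(p, Φ) = −∑_{j∈N_i} √(ω_{ij}) H'_{ij}( √(ω_{ij}) (Φ_j − Φ_i) ) θ_{ij}(p), and (∂/∂p_i) 𝓗(p, Φ) = ∑_{j∈N_i} H_{ij}( √(ω_{ij}) (Φ_j − Φ_i) ) (∂θ_{ij}/∂p_i)(p) + (∂ℱ/∂p_i)(p). Consequently, the discrete mean field game system dp_s(i)/ds + ∑_{j∈N_i}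 √(ω_{ij}) θ_{ij}(p_s) H'_{ij}((∇̄_ω Φ_s)_{i,j}) = 0, dΦ_s(i)/ds + ∑_{j∈N_i} H_{ij}((∇̄_ω Φ_s)_{i,j}) (∂θ_{ij}/∂p_i)(p_s) + (∂ℱ/∂p_i)(p_s) = 0 is exactly the Hamiltonian system dp_s(i)/ds = (∂𝓗/∂Φ_i)(p_s, Φ_s), dΦ_s(i)/ds = −(∂𝓗/∂p_i)(p_s, Φ_s). -/
open Finset

noncomputable section DiscreteMFGHamiltonian

/-- Neighborhood of `i` in the weighted graph induced by `ω`. -/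
def mfgNbr (n : ℕ) (ω : Fin n → Fin n → ℝ) (i : Fin n) : Finset (Fin n) :=
  Finset.univ.filter (fun j => j ≠ i ∧ 0 < ω i j)

/-- The discrete mean field game Hamiltonian
`𝓗(p, Φ) = (1/2) ∑_{(i,j)∈E} H_{ij}(√(ω_{ij}) (Φ_j − Φ_i)) θ(p_i/π_i, p_j/π_j) + ℱ(p)`. -/
def discreteHam (n : ℕ) (ω : Fin n → Fin n → ℝ) (π : Fin n → ℝ) (θ : ℝ → ℝ → ℝ)
    (H : Fin n → Fin n → ℝ → ℝ) (F : (Fin n → ℝ) → ℝ)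
    (p Φ : Fin n → ℝ) : ℝ :=
  (1/2) * ∑ i, ∑ j ∈ mfgNbr n ω i,
      H i j (Real.sqrt (ω i j) * (Φ j - Φ i)) * θ (p i / π i) (p j / π j)
    + F p

/-- Partial derivatives of the discrete mean field game Hamiltonian:
`∂𝓗/∂Φ_i = −∑_{j∈N_i} √(ω_{ij}) H'_{ij}(√(ω_{ij})(Φ_j−Φ_i)) θ_{ij}(p)` and
`∂𝓗/∂p_i = ∑_{j∈N_i} H_{ij}(√(ω_{ij})(Φ_j−Φ_i)) ∂θ_{ij}/∂p_i + ∂ℱ/∂p_i`; consequently the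
discrete mean field game system is exactly the Hamiltonian system for `𝓗`. -/
theorem discreteHam_partial_derivatives
    (n : ℕ) (ω : Fin n → Fin n → ℝ) (π : Fin n → ℝ)
    (θ θ₁ : ℝ → ℝ → ℝ)
    (H H' : Fin n → Fin n → ℝ → ℝ)
    (F : (Fin n → ℝ) → ℝ) (F' : Fin n → (Fin n → ℝ) → ℝ)
    (hωsym : ∀ i j, ω i j = ω j i)
    (hωnonneg : ∀ i j, i ≠ j → 0 ≤ ω i j)
    (hπ : ∀ i, 0 < π i)
    (hθsym : ∀ x y, θ x y = θ y x)
    (hθ₁ : ∀ x y : ℝ, 0 < x → 0 < y → HasDerivAt (fun z => θ z y) (θ₁ x y) x)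
    (hH' : ∀ i j a, HasDerivAt (H i j) (H' i j a) a)
    (hHeven : ∀ i j a, H i j (-a) = H i j a)
    (hHsym : ∀ i j, H i j = H j i)
    (hF' : ∀ p : Fin n → ℝ, (∀ i, 0 < p i) → ∀ i,
      HasDerivAt (fun y => F (Function.update p i y)) (F' i p) (p i)) :
    (∀ (p Φ : Fin n → ℝ), (∀ i, 0 < p i) → ∀ i,
      HasDerivAt (fun y => discreteHam n ω π θ H F p (Function.update Φ i y))
        (-(∑ j ∈ mfgNbr n ω i, Real.sqrt (ω i j) *
            H' i j (Real.sqrt (ω i j) * (Φ j - Φ i)) * θ (p i / π i) (p j / π j)))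
        (Φ i)) ∧
    (∀ (p Φ : Fin n → ℝ), (∀ i, 0 < p i) → ∀ i,
      HasDerivAt (fun y => discreteHam n ω π θ H F (Function.update p i y) Φ)
        (∑ j ∈ mfgNbr n ω i, H i j (Real.sqrt (ω i j) * (Φ j - Φ i)) *
            (θ₁ (p i / π i) (p j / π j) / π i)
          + F' i p)
        (p i)) ∧
    (∀ (ps Φs : ℝ → Fin n → ℝ) (s : ℝ), (∀ i, 0 < ps s i) →
      (((∀ i, HasDerivAt (fun r => ps r i)
          (-(∑ j ∈ mfgNbr n ω i, Real.sqrt (ω i j) *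
              θ (ps s i / π i) (ps s j / π j) *
              H' i j (Real.sqrt (ω i j) * (Φs s j - Φs s i)))) s) ∧
        (∀ i, HasDerivAt (fun r => Φs r i)
          (-(∑ j ∈ mfgNbr n ω i,
              H i j (Real.sqrt (ω i j) * (Φs s j - Φs s i)) *
                (θ₁ (ps s i / π i) (ps s j / π j) / π i)
            + F' i (ps s))) s))
      ↔
      ((∀ i, HasDerivAt (fun r => ps r i)
          (deriv (fun y => discreteHam n ω π θ H F (ps s) (Function.update (Φs s) i y))
            (Φs s i)) s) ∧
        (∀ i, HasDerivAt (fun r => Φs r i)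
          (-(deriv (fun y => discreteHam n ω π θ H F (Function.update (ps s) i y) (Φs s))
            (ps s i))) s)))) := by
  classical
  -- basic helper facts
  have hH'sym : ∀ i j a, H' i j a = H' j i a := by
    intro i j a
    exact (hH' i j a).unique (by rw [hHsym i j]; exact hH' j i a)
  have hH'odd : ∀ i j a, H' i j (-a) = - H' i j a := by
    intro i j a
    have h1 : HasDerivAt (fun x => H i j (-x)) (H' i j (-a) * (-1)) a :=
      (hH' i j (-a)).comp a (hasDerivAt_neg a)
    have h2 : (fun x => H i j (-x)) = H i j := funext fun x => hHeven i j x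
    rw [h2] at h1
    have := (hH' i j a).unique h1
    linarith
  have hmem : ∀ a b, b ∈ mfgNbr n ω a ↔ b ≠ a ∧ 0 < ω a b := by
    intro a b; simp [mfgNbr]
  have hnbr_symm : ∀ a b : Fin n, (b ∈ mfgNbr n ω a) = (a ∈ mfgNbr n ω b) := by
    intro a b
    simp only [hmem, hωsym a b]
    rw [ne_comm]
  -- part 1 : derivative in Φ i
  have partΦ : ∀ (p Φ : Fin n → ℝ), (∀ i, 0 < p i) → ∀ i,
      HasDerivAt (fun y => discreteHam n ω π θ H F p (Function.update Φ i y))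
        (-(∑ j ∈ mfgNbr n ω i, Real.sqrt (ω i j) *
            H' i j (Real.sqrt (ω i j) * (Φ j - Φ i)) * θ (p i / π i) (p j / π j)))
        (Φ i) := by
    intro p Φ hp i
    set d1 : Fin n → ℝ := fun j =>
      -(Real.sqrt (ω i j) * H' i j (Real.sqrt (ω i j) * (Φ j - Φ i)) *
        θ (p i / π i) (p j / π j)) with hd1
    set d2 : Fin n → ℝ := fun a =>
      Real.sqrt (ω a i) * H' a i (Real.sqrt (ω a i) * (Φ i - Φ a)) *
        θ (p a / π a) (p i / π i) with hd2
    set D : Fin n → Fin n → ℝ := fun a b =>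
      if a = i then d1 b else if b = i then d2 a else 0 with hD
    have key : HasDerivAt (fun y => ∑ a, ∑ b ∈ mfgNbr n ω a,
        H a b (Real.sqrt (ω a b) * (Function.update Φ i y b - Function.update Φ i y a)) *
          θ (p a / π a) (p b / π b)) (∑ a, ∑ b ∈ mfgNbr n ω a, D a b) (Φ i) := by
      apply HasDerivAt.fun_sum; intro a _
      apply HasDerivAt.fun_sum; intro b hb
      have hba : b ≠ a := ((hmem a b).1 hb).1
      by_cases ha : a = i
      · subst ha
        simp only [Function.update_self, Function.update_of_ne hba]
        have hsub : HasDerivAt (fun y : ℝ => Φ b - y) (0 - 1) (Φ a) :=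
          (hasDerivAt_const _ _).sub (hasDerivAt_id _)
        have h0 : HasDerivAt (fun y : ℝ => Real.sqrt (ω a b) * (Φ b - y))
            (Real.sqrt (ω a b) * (0 - 1)) (Φ a) := hsub.const_mul _
        have hcomp := (hH' a b (Real.sqrt (ω a b) * (Φ b - Φ a))).comp (Φ a) h0
        have hmul := hcomp.mul_const (θ (p a / π a) (p b / π b))
        have hval : D a b = H' a b (Real.sqrt (ω a b) * (Φ b - Φ a)) *
            (Real.sqrt (ω a b) * (0 - 1)) * θ (p a / π a) (p b / π b) := by
          simp only [hD, hd1, reduceIte]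
          ring
        rw [hval]
        exact hmul
      · by_cases hbi : b = i
        · subst hbi
          simp only [Function.update_self, Function.update_of_ne ha]
          have hsub : HasDerivAt (fun y : ℝ => y - Φ a) 1 (Φ b) :=
            (hasDerivAt_id _).sub_const _
          have h0 : HasDerivAt (fun y : ℝ => Real.sqrt (ω a b) * (y - Φ a))
              (Real.sqrt (ω a b) * 1) (Φ b) := hsub.const_mul _
          have hcomp := (hH' a b (Real.sqrt (ω a b) * (Φ b - Φ a))).comp (Φ b) h0
          have hmul := hcomp.mul_const (θ (p a / π a) (p b / π b))
          have hval : D a b = H' a b (Real.sqrt (ω a b) * (Φ b - Φ a)) *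
              (Real.sqrt (ω a b) * 1) * θ (p a / π a) (p b / π b) := by
            simp only [hD, hd2, if_neg ha, reduceIte]
            ring
          rw [hval]
          exact hmul
        · simp only [Function.update_of_ne ha, Function.update_of_ne hbi]
          have : D a b = 0 := by simp [hD, ha, hbi]
          rw [this]
          exact hasDerivAt_const _ _
    have hd2d1 : ∀ a ∈ mfgNbr n ω i, d2 a = d1 a := by
      intro a ha
      have h1 : Real.sqrt (ω i a) * (Φ i - Φ a)
          = -(Real.sqrt (ω i a) * (Φ a - Φ i)) := by ring
      simp only [hd1, hd2, hωsym a i, hθsym (p a / π a) (p i / π i), hH'sym a i,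
        h1, hH'odd]
      ring
    have hsum : ∑ a, ∑ b ∈ mfgNbr n ω a, D a b = 2 * ∑ j ∈ mfgNbr n ω i, d1 j := by
      rw [← Finset.add_sum_erase _ _ (Finset.mem_univ i)]
      have hDi : ∑ b ∈ mfgNbr n ω i, D i b = ∑ b ∈ mfgNbr n ω i, d1 b :=
        Finset.sum_congr rfl fun b _ => by simp [hD]
      have hinner : ∑ a ∈ Finset.univ.erase i, ∑ b ∈ mfgNbr n ω a, D a b
          = ∑ a ∈ Finset.univ.erase i, (if a ∈ mfgNbr n ω i then d2 a else 0) := by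
        refine Finset.sum_congr rfl fun a ha => ?_
        have ha' : a ≠ i := Finset.ne_of_mem_erase ha
        have h1 : ∀ b ∈ mfgNbr n ω a, D a b = if b = i then d2 a else 0 :=
          fun b _ => by simp [hD, ha']
        rw [Finset.sum_congr rfl h1, Finset.sum_ite_eq' (mfgNbr n ω a) i (fun _ => d2 a)]
        simp only [hnbr_symm a i]
      have hsub : mfgNbr n ω i ⊆ Finset.univ.erase i := by
        intro a ha
        exact Finset.mem_erase.2 ⟨((hmem i a).1 ha).1, Finset.mem_univ a⟩
      rw [hDi, hinner, Finset.sum_ite_mem,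
        Finset.inter_eq_right.2 hsub, Finset.sum_congr rfl hd2d1]
      ring
    have final := (key.const_mul (1/2 : ℝ)).add_const (F p)
    simp only [discreteHam]
    convert final using 1
    case e'_4 => rfl
    case e'_5 => rfl
    rw [hsum]
    simp only [hd1, ← Finset.sum_neg_distrib]
    ring
  -- part 2 : derivative in p i
  have partp : ∀ (p Φ : Fin n → ℝ), (∀ i, 0 < p i) → ∀ i,
      HasDerivAt (fun y => discreteHam n ω π θ H F (Function.update p i y) Φ)
        (∑ j ∈ mfgNbr n ω i, H i j (Real.sqrt (ω i j) * (Φ j - Φ i)) *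
            (θ₁ (p i / π i) (p j / π j) / π i)
          + F' i p)
        (p i) := by
    intro p Φ hp i
    set d1 : Fin n → ℝ := fun j =>
      H i j (Real.sqrt (ω i j) * (Φ j - Φ i)) * (θ₁ (p i / π i) (p j / π j) / π i) with hd1
    set d2 : Fin n → ℝ := fun a =>
      H a i (Real.sqrt (ω a i) * (Φ i - Φ a)) * (θ₁ (p i / π i) (p a / π a) / π i) with hd2
    set D : Fin n → Fin n → ℝ := fun a b =>
      if a = i then d1 b else if b = i then d2 a else 0 with hD
    have hθder : ∀ c : ℝ, 0 < c →
        HasDerivAt (fun y : ℝ => θ (y / π i) c) (θ₁ (p i / π i) c * (1 / π i)) (p i) := by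
      intro c hc
      have hdiv : HasDerivAt (fun y : ℝ => y / π i) (1 / π i) (p i) := by
        simpa using (hasDerivAt_id (p i)).div_const (π i)
      exact (hθ₁ (p i / π i) c (div_pos (hp i) (hπ i)) hc).comp (p i) hdiv
    have key : HasDerivAt (fun y => ∑ a, ∑ b ∈ mfgNbr n ω a,
        H a b (Real.sqrt (ω a b) * (Φ b - Φ a)) *
          θ (Function.update p i y a / π a) (Function.update p i y b / π b))
        (∑ a, ∑ b ∈ mfgNbr n ω a, D a b) (p i) := by
      apply HasDerivAt.fun_sum; intro a _
      apply HasDerivAt.fun_sum; intro b hb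
      have hba : b ≠ a := ((hmem a b).1 hb).1
      by_cases ha : a = i
      · subst ha
        simp only [Function.update_self, Function.update_of_ne hba]
        have hmul := (hθder (p b / π b) (div_pos (hp b) (hπ b))).const_mul
          (H a b (Real.sqrt (ω a b) * (Φ b - Φ a)))
        have hval : D a b = H a b (Real.sqrt (ω a b) * (Φ b - Φ a)) *
            (θ₁ (p a / π a) (p b / π b) * (1 / π a)) := by
          simp only [hD, hd1, reduceIte]
          ring
        rw [hval]
        exact hmul
      · by_cases hbi : b = i
        · subst hbi
          simp only [Function.update_self, Function.update_of_ne ha]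
          have heq : (fun y : ℝ => H a b (Real.sqrt (ω a b) * (Φ b - Φ a)) *
              θ (p a / π a) (y / π b))
              = fun y : ℝ => H a b (Real.sqrt (ω a b) * (Φ b - Φ a)) *
              θ (y / π b) (p a / π a) :=
            funext fun y => by rw [hθsym]
          rw [heq]
          have hmul := (hθder (p a / π a) (div_pos (hp a) (hπ a))).const_mul
            (H a b (Real.sqrt (ω a b) * (Φ b - Φ a)))
          have hval : D a b = H a b (Real.sqrt (ω a b) * (Φ b - Φ a)) *
              (θ₁ (p b / π b) (p a / π a) * (1 / π b)) := by
            simp only [hD, hd2, if_neg ha, reduceIte]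
            ring
          rw [hval]
          exact hmul
        · simp only [Function.update_of_ne ha, Function.update_of_ne hbi]
          have : D a b = 0 := by simp [hD, ha, hbi]
          rw [this]
          exact hasDerivAt_const _ _
    have hd2d1 : ∀ a ∈ mfgNbr n ω i, d2 a = d1 a := by
      intro a ha
      have h1 : Real.sqrt (ω a i) * (Φ i - Φ a)
          = -(Real.sqrt (ω a i) * (Φ a - Φ i)) := by ring
      simp only [hd1, hd2]
      rw [h1, hHsym a i, hHeven, hωsym a i]
    have hsum : ∑ a, ∑ b ∈ mfgNbr n ω a, D a b = 2 * ∑ j ∈ mfgNbr n ω i, d1 j := by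
      rw [← Finset.add_sum_erase _ _ (Finset.mem_univ i)]
      have hDi : ∑ b ∈ mfgNbr n ω i, D i b = ∑ b ∈ mfgNbr n ω i, d1 b :=
        Finset.sum_congr rfl fun b _ => by simp [hD]
      have hinner : ∑ a ∈ Finset.univ.erase i, ∑ b ∈ mfgNbr n ω a, D a b
          = ∑ a ∈ Finset.univ.erase i, (if a ∈ mfgNbr n ω i then d2 a else 0) := by
        refine Finset.sum_congr rfl fun a ha => ?_
        have ha' : a ≠ i := Finset.ne_of_mem_erase ha
        have h1 : ∀ b ∈ mfgNbr n ω a, D a b = if b = i then d2 a else 0 :=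
          fun b _ => by simp [hD, ha']
        rw [Finset.sum_congr rfl h1, Finset.sum_ite_eq' (mfgNbr n ω a) i (fun _ => d2 a)]
        simp only [hnbr_symm a i]
      have hsub : mfgNbr n ω i ⊆ Finset.univ.erase i := by
        intro a ha
        exact Finset.mem_erase.2 ⟨((hmem i a).1 ha).1, Finset.mem_univ a⟩
      rw [hDi, hinner, Finset.sum_ite_mem,
        Finset.inter_eq_right.2 hsub, Finset.sum_congr rfl hd2d1]
      ring
    have final := (key.const_mul (1/2 : ℝ)).add (hF' p hp i)
    simp only [discreteHam]
    convert final using 1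
    case e'_4 => rfl
    case e'_5 => rfl
    case e'_8 => rfl
    rw [hsum]
    ring
  refine ⟨partΦ, partp, ?_⟩
  intro ps Φs s hp
  have e1 : ∀ i, deriv (fun y => discreteHam n ω π θ H F (ps s) (Function.update (Φs s) i y))
      (Φs s i) = -(∑ j ∈ mfgNbr n ω i, Real.sqrt (ω i j) *
        θ (ps s i / π i) (ps s j / π j) *
        H' i j (Real.sqrt (ω i j) * (Φs s j - Φs s i))) := by
    intro i
    rw [(partΦ (ps s) (Φs s) hp i).deriv]
    congr 1
    exact Finset.sum_congr rfl fun j _ => by ring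
  have e2 : ∀ i, -(deriv (fun y => discreteHam n ω π θ H F (Function.update (ps s) i y) (Φs s))
      (ps s i)) = -(∑ j ∈ mfgNbr n ω i,
        H i j (Real.sqrt (ω i j) * (Φs s j - Φs s i)) *
          (θ₁ (ps s i / π i) (ps s j / π j) / π i)
        + F' i (ps s)) := by
    intro i
    rw [(partp (ps s) (Φs s) hp i).deriv]
  simp only [e1, e2]


end DiscreteMFGHamiltonian
end

section
/- Verification theorem for the functional Hamilton–Jacobi equation on the finite probability simplex: let 𝒰 be continuously differentiable on O × (−∞, T] (O an open set containing the relevant densities) and solve ∂_t 𝒰(p,t) + (1/2) ∑_{(i,j)∈E} H_{ij}( (∇̄_ω ∇_p 𝒰(p,t))_{i,j} ) θ_{ij}(p) + ℱ(p) = 0 for t ≤ T, with 𝒰(p,T) = 𝒢(p). Then: (a) for every continuously differentiable admissible pair (p_s, v_s), s ∈ [t,T], with v_s antisymmetric, dp_s(i)/ds + ∑_{j∈N_i} √(ω_{ij}) θ_{ij}(p_s) v_s(ij) = 0, p_t = p, and p_s ∈ O ∩ 𝒫, the payoff 𝒢(p_T) − ∫_t^T [ (1/2) ∑_{(i,j)∈E}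 θ_{ij}(p_s) L_{ij}(v_s(ij)) − ℱ(p_s) ] ds is at most 𝒰(p,t); and (b) if (p*_s) is such an admissible curve driven by the feedback control v*_s(ij) = H'_{ij}( (∇̄_ω ∇_p 𝒰(p*_s, s))_{i,j} ), then its payoff equals 𝒰(p,t); hence 𝒰(p,t) equals the value function of the discrete potential mean field game. -/
open Finset

noncomputable section DiscreteHJEVerification

/-! ### Auxiliary lemmas -/

/-- From the Fenchel–Young inequalities, `H'` is monotone. -/
lemma mfg_H'_mono {L H H' : ℝ → ℝ} (hFY : ∀ v a, v * a - H a ≤ L v)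
    (hFYeq : ∀ a, L (H' a) = H' a * a - H a) : Monotone H' := by
  intro a b hab
  rcases eq_or_lt_of_le hab with rfl | hab
  · exact le_rfl
  · by_contra hlt
    push_neg at hlt
    have h1 := hFY (H' a) b
    have h2 := hFY (H' b) a
    rw [hFYeq] at h1 h2
    nlinarith

/-- A monotone everywhere-derivative is continuous (Darboux + monotonicity). -/
lemma mfg_H'_cont {H H' : ℝ → ℝ} (hH' : ∀ a, HasDerivAt H (H' a) a)
    (hmono : Monotone H') : Continuous H' := by
  have hdarboux : Set.OrdConnected (H' '' Set.univ) :=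
    Set.ordConnected_univ.image_hasDerivWithinAt
      (f := H) (fun x _ => (hH' x).hasDerivWithinAt)
  rw [continuous_iff_continuousAt]
  intro a
  rw [continuousAt_iff_continuous_left_right]
  constructor
  · by_cases hc : ∀ x < a, H' x = H' a
    · have hev : ∀ᶠ x in nhdsWithin a (Set.Iic a), H' x = H' a := by
        filter_upwards [self_mem_nhdsWithin] with x hx
        rcases lt_or_eq_of_le (show x ≤ a from hx) with h | h
        · exact hc x h
        · rw [h]
      exact Filter.Tendsto.congr' (by filter_upwards [hev] with x hx; exact hx.symm)
        tendsto_const_nhds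
    · push_neg at hc
      obtain ⟨x₀, hx₀a, hne⟩ := hc
      have hx₀ : H' x₀ < H' a := lt_of_le_of_ne (hmono hx₀a.le) hne
      refine continuousWithinAt_left_of_monotoneOn_of_exists_between
        (hmono.monotoneOn _) Filter.univ_mem ?_
      intro b hb
      obtain ⟨m, hm1, hm2⟩ := exists_between (max_lt hb hx₀ : max b (H' x₀) < H' a)
      have : m ∈ H' '' Set.univ := hdarboux.out ⟨x₀, trivial, rfl⟩ ⟨a, trivial, rfl⟩
        ⟨le_of_lt (lt_of_le_of_lt (le_max_right _ _) hm1), hm2.le⟩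
      obtain ⟨c, -, hcm⟩ := this
      exact ⟨c, trivial, by rw [hcm]; exact ⟨lt_of_le_of_lt (le_max_left _ _) hm1, hm2⟩⟩
  · by_cases hc : ∀ x, a < x → H' x = H' a
    · have hev : ∀ᶠ x in nhdsWithin a (Set.Ici a), H' x = H' a := by
        filter_upwards [self_mem_nhdsWithin] with x hx
        rcases lt_or_eq_of_le (show a ≤ x from hx) with h | h
        · exact hc x h
        · rw [← h]
      exact Filter.Tendsto.congr' (by filter_upwards [hev] with x hx; exact hx.symm)
        tendsto_const_nhds
    · push_neg at hc
      obtain ⟨x₀, hx₀a, hne⟩ := hc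
      have hx₀ : H' a < H' x₀ := lt_of_le_of_ne (hmono hx₀a.le) (Ne.symm hne)
      refine continuousWithinAt_right_of_monotoneOn_of_exists_between
        (hmono.monotoneOn _) Filter.univ_mem ?_
      intro b hb
      obtain ⟨m, hm1, hm2⟩ := exists_between (lt_min hx₀ hb : H' a < min (H' x₀) b)
      have : m ∈ H' '' Set.univ := hdarboux.out ⟨a, trivial, rfl⟩ ⟨x₀, trivial, rfl⟩
        ⟨hm1.le, le_of_lt (lt_of_lt_of_le hm2 (min_le_left _ _))⟩
      obtain ⟨c, -, hcm⟩ := this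
      exact ⟨c, trivial, by rw [hcm]; exact ⟨hm1, lt_of_lt_of_le hm2 (min_le_right _ _)⟩⟩

lemma mfg_H_le {L Hij Hji H'ij : ℝ → ℝ} (hFYji : ∀ v a, v * a - Hji a ≤ L v)
    (hFYeqij : ∀ a, L (H'ij a) = H'ij a * a - Hij a) : ∀ a, Hij a ≤ Hji a := fun a => by
  have h := hFYji (H'ij a) a
  rw [hFYeqij] at h
  linarith

lemma mfg_H_even {L H H' : ℝ → ℝ} (hLeven : ∀ a, L (-a) = L a)
    (hFY : ∀ v a, v * a - H a ≤ L v) (hFYeq : ∀ a, L (H' a) = H' a * a - H a) :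
    ∀ a, H (-a) = H a := by
  have key : ∀ a, H a ≤ H (-a) := by
    intro a
    have h1 := hFY (-(H' a)) (-a)
    rw [hLeven (H' a), hFYeq a] at h1
    nlinarith
  intro a
  have h1 := key a
  have h2 := key (-a)
  rw [neg_neg] at h2
  linarith

lemma mfg_H'_odd {H H' : ℝ → ℝ} (hH' : ∀ a, HasDerivAt H (H' a) a)
    (heven : ∀ a, H (-a) = H a) : ∀ a, H' (-a) = - H' a := by
  intro a
  have h1 : HasDerivAt (fun x : ℝ => H (-x)) (H' (-a) * (-1)) a :=
    (hH' (-a)).comp a (hasDerivAt_neg a)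
  have h2 : (fun x : ℝ => H (-x)) = H := funext heven
  rw [h2] at h1
  have h3 := h1.unique (hH' a)
  linarith

lemma mfg_mem_nbr {n : ℕ} {ω : Fin n → Fin n → ℝ} {i j : Fin n} :
    j ∈ mfgNbr n ω i ↔ j ≠ i ∧ 0 < ω i j := by
  simp [mfgNbr]

lemma mfg_swap {n : ℕ} {ω : Fin n → Fin n → ℝ} (hωsym : ∀ i j, ω i j = ω j i)
    (f : Fin n → Fin n → ℝ) :
    ∑ i, ∑ j ∈ mfgNbr n ω i, f i j = ∑ i, ∑ j ∈ mfgNbr n ω i, f j i := by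
  have h1 : ∀ (g : Fin n → Fin n → ℝ), ∑ i, ∑ j ∈ mfgNbr n ω i, g i j
      = ∑ i : Fin n, ∑ j : Fin n, if j ≠ i ∧ 0 < ω i j then g i j else 0 := by
    intro g
    refine Finset.sum_congr rfl fun i _ => ?_
    rw [mfgNbr, Finset.sum_filter]
  rw [h1, h1, Finset.sum_comm]
  refine Finset.sum_congr rfl fun i _ => Finset.sum_congr rfl fun j _ => ?_
  refine if_congr ?_ rfl rfl
  constructor
  · rintro ⟨ha, hb⟩; exact ⟨ha.symm, by rwa [hωsym] at hb⟩
  · rintro ⟨ha, hb⟩; exact ⟨ha.symm, by rwa [hωsym] at hb⟩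

/-- Discrete "integration by parts" / symmetrization of the drift term. -/
lemma mfg_sym_sum {n : ℕ} {ω : Fin n → Fin n → ℝ} (hωsym : ∀ i j, ω i j = ω j i)
    (U : Fin n → ℝ) (θ v : Fin n → Fin n → ℝ)
    (hθsym : ∀ i j, θ i j = θ j i)
    (hanti : ∀ i j, j ≠ i → 0 < ω i j → v i j = - v j i) :
    ∑ i, U i * (-(∑ j ∈ mfgNbr n ω i, Real.sqrt (ω i j) * θ i j * v i j))
      = (1/2) * ∑ i, ∑ j ∈ mfgNbr n ω i,
          θ i j * (v i j * (Real.sqrt (ω i j) * (U j - U i))) := by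
  set S2 : ℝ := ∑ i, ∑ j ∈ mfgNbr n ω i, θ i j * (v i j * (Real.sqrt (ω i j) * U i)) with hS2
  have hLHS : ∑ i, U i * (-(∑ j ∈ mfgNbr n ω i, Real.sqrt (ω i j) * θ i j * v i j)) = -S2 := by
    rw [hS2, ← Finset.sum_neg_distrib]
    refine Finset.sum_congr rfl fun i _ => ?_
    rw [mul_neg, Finset.mul_sum, neg_inj]
    refine Finset.sum_congr rfl fun j _ => by ring
  have hS1 : ∑ i, ∑ j ∈ mfgNbr n ω i, θ i j * (v i j * (Real.sqrt (ω i j) * U j)) = -S2 := by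
    rw [mfg_swap hωsym (fun i j => θ i j * (v i j * (Real.sqrt (ω i j) * U j)))]
    rw [hS2, ← Finset.sum_neg_distrib]
    refine Finset.sum_congr rfl fun i _ => ?_
    rw [← Finset.sum_neg_distrib]
    refine Finset.sum_congr rfl fun j hj => ?_
    obtain ⟨hne, hpos⟩ := mfg_mem_nbr.1 hj
    have hv : v j i = - v i j := by
      have := hanti i j hne hpos; linarith
    rw [hθsym j i, hωsym j i, hv]; ring
  have hsplit : ∑ i, ∑ j ∈ mfgNbr n ω i,
      θ i j * (v i j * (Real.sqrt (ω i j) * (U j - U i)))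
      = (∑ i, ∑ j ∈ mfgNbr n ω i, θ i j * (v i j * (Real.sqrt (ω i j) * U j))) - S2 := by
    rw [hS2, ← Finset.sum_sub_distrib]
    refine Finset.sum_congr rfl fun i _ => ?_
    rw [← Finset.sum_sub_distrib]
    refine Finset.sum_congr rfl fun j _ => by ring
  rw [hLHS, hsplit, hS1]; ring

section UDeriv

variable {n : ℕ} {O : Set (Fin n → ℝ)} {T : ℝ}
  {𝒰 Ut : (Fin n → ℝ) → ℝ → ℝ} {Up : Fin n → (Fin n → ℝ) → ℝ → ℝ}

/-- A function with continuous partial derivatives is (Fréchet) differentiable,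
within `univ ×ˢ Iic T`. -/
lemma mfg_U_fderiv (hO : IsOpen O)
    (hUt : ∀ p ∈ O, ∀ s ≤ T, HasDerivAt (fun r => 𝒰 p r) (Ut p s) s)
    (hUp : ∀ p ∈ O, ∀ s ≤ T, ∀ i,
      HasDerivAt (fun y => 𝒰 (Function.update p i y) s) (Up i p s) (p i))
    (hUtc : ContinuousOn (fun q : (Fin n → ℝ) × ℝ => Ut q.1 q.2) (O ×ˢ Set.Iic T))
    (hUpc : ∀ i, ContinuousOn (fun q : (Fin n → ℝ) × ℝ => Up i q.1 q.2) (O ×ˢ Set.Iic T))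
    {q : Fin n → ℝ} (hq : q ∈ O) {τ : ℝ} (hτ : τ ≤ T) :
    HasFDerivWithinAt (fun z : (Fin n → ℝ) × ℝ => 𝒰 z.1 z.2)
      ((∑ i, Up i q τ • ((ContinuousLinearMap.proj i : (Fin n → ℝ) →L[ℝ] ℝ).comp
          (ContinuousLinearMap.fst ℝ (Fin n → ℝ) ℝ))) +
        Ut q τ • ContinuousLinearMap.snd ℝ (Fin n → ℝ) ℝ)
      (Set.univ ×ˢ Set.Iic T) (q, τ) := by
  have hmem : ((q, τ) : (Fin n → ℝ) × ℝ) ∈ O ×ˢ Set.Iic T := ⟨hq, hτ⟩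
  rw [hasFDerivWithinAt_iff_isLittleO]
  rw [Asymptotics.isLittleO_iff]
  intro c hc
  set ε : ℝ := c / (n + 1) with hεdef
  have hε : 0 < ε := by positivity
  have hΦ : ContinuousWithinAt
      (fun z : (Fin n → ℝ) × ℝ => ((Ut z.1 z.2, fun i => Up i z.1 z.2) : ℝ × (Fin n → ℝ)))
      (O ×ˢ Set.Iic T) (q, τ) :=
    (hUtc.continuousWithinAt hmem).prodMk
      ((continuousWithinAt_pi).2 fun i => (hUpc i).continuousWithinAt hmem)
  rw [Metric.continuousWithinAt_iff] at hΦ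
  obtain ⟨δ₁, hδ₁pos, hδ₁⟩ := hΦ ε hε
  have hUtclose : ∀ (q' : Fin n → ℝ) (τ' : ℝ), q' ∈ O → τ' ≤ T →
      dist q' q < δ₁ → dist τ' τ < δ₁ → |Ut q' τ' - Ut q τ| ≤ ε := by
    intro q' τ' hq' hτ' h1 h2
    have := hδ₁ (x := (q', τ')) ⟨hq', hτ'⟩ (by rw [Prod.dist_eq]; exact max_lt h1 h2)
    have h3 : dist (Ut q' τ') (Ut q τ) ≤
        dist ((Ut q' τ', fun i => Up i q' τ') : ℝ × (Fin n → ℝ))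
          ((Ut q τ, fun i => Up i q τ) : ℝ × (Fin n → ℝ)) := by
      rw [Prod.dist_eq]; exact le_max_left _ _
    rw [Real.dist_eq] at h3
    exact le_of_lt (lt_of_le_of_lt h3 this)
  have hUpclose : ∀ (i : Fin n) (q' : Fin n → ℝ) (τ' : ℝ), q' ∈ O → τ' ≤ T →
      dist q' q < δ₁ → dist τ' τ < δ₁ → |Up i q' τ' - Up i q τ| ≤ ε := by
    intro i q' τ' hq' hτ' h1 h2
    have := hδ₁ (x := (q', τ')) ⟨hq', hτ'⟩ (by rw [Prod.dist_eq]; exact max_lt h1 h2)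
    have h3 : dist (Up i q' τ') (Up i q τ) ≤
        dist ((Ut q' τ', fun i => Up i q' τ') : ℝ × (Fin n → ℝ))
          ((Ut q τ, fun i => Up i q τ) : ℝ × (Fin n → ℝ)) := by
      rw [Prod.dist_eq]
      exact le_trans (dist_le_pi_dist (fun i => Up i q' τ') (fun i => Up i q τ) i)
        (le_max_right _ _)
    rw [Real.dist_eq] at h3
    exact le_of_lt (lt_of_le_of_lt h3 this)
  obtain ⟨δ₂, hδ₂pos, hδ₂⟩ := Metric.isOpen_iff.1 hO q hq
  set δ : ℝ := min δ₁ δ₂ with hδdef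
  have hδpos : 0 < δ := lt_min hδ₁pos hδ₂pos
  have main : ∀ z : (Fin n → ℝ) × ℝ, z ∈ (Set.univ ×ˢ Set.Iic T : Set ((Fin n → ℝ) × ℝ)) →
      dist z (q, τ) < δ →
      ‖𝒰 z.1 z.2 - 𝒰 q τ -
        (((∑ i, Up i q τ • ((ContinuousLinearMap.proj i : (Fin n → ℝ) →L[ℝ] ℝ).comp
          (ContinuousLinearMap.fst ℝ (Fin n → ℝ) ℝ))) +
        Ut q τ • ContinuousLinearMap.snd ℝ (Fin n → ℝ) ℝ) (z - (q, τ)))‖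
      ≤ c * ‖z - (q, τ)‖ := by
    rintro ⟨q', τ'⟩ ⟨-, (hτ' : τ' ≤ T)⟩ hdist
    have hdq : dist q' q < δ :=
      lt_of_le_of_lt (by rw [Prod.dist_eq]; exact le_max_left _ _) hdist
    have hdτ : dist τ' τ < δ :=
      lt_of_le_of_lt (by rw [Prod.dist_eq]; exact le_max_right _ _) hdist
    have hq'O : q' ∈ O := hδ₂ (Metric.mem_ball.2 (lt_of_lt_of_le hdq (min_le_right _ _)))
    have hmemO : ∀ u : Fin n → ℝ, (∀ i, dist (u i) (q i) ≤ dist q' q) → u ∈ O ∧ dist u q < δ := by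
      intro u hu
      have : dist u q ≤ dist q' q := (dist_pi_le_iff dist_nonneg).2 hu
      have h2 : dist u q < δ := lt_of_le_of_lt this hdq
      exact ⟨hδ₂ (Metric.mem_ball.2 (lt_of_lt_of_le h2 (min_le_right _ _))), h2⟩
    have huIccT : Set.uIcc τ τ' ⊆ Set.Iic T :=
      Set.ordConnected_Iic.uIcc_subset hτ hτ'
    have hA : |𝒰 q' τ' - 𝒰 q' τ - Ut q τ * (τ' - τ)| ≤ ε * |τ' - τ| := by
      have hder : ∀ r ∈ Set.uIcc τ τ',
          HasDerivWithinAt (fun r => 𝒰 q' r - Ut q τ * r) (Ut q' r - Ut q τ)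
            (Set.uIcc τ τ') r := by
        intro r hr
        have h1 : HasDerivAt (fun r => 𝒰 q' r) (Ut q' r) r := hUt q' hq'O r (huIccT hr)
        have h2 : HasDerivAt (fun r : ℝ => Ut q τ * r) (Ut q τ) r := by
          simpa using (hasDerivAt_id r).const_mul (Ut q τ)
        exact (h1.sub h2).hasDerivWithinAt
      have hbd : ∀ r ∈ Set.uIcc τ τ', ‖Ut q' r - Ut q τ‖ ≤ ε := by
        intro r hr
        have hrτ : dist r τ ≤ dist τ' τ := by
          have := Real.dist_le_of_mem_uIcc hr (Set.left_mem_uIcc (a := τ) (b := τ'))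
          rwa [dist_comm τ τ'] at this
        exact hUtclose q' r hq'O (huIccT hr)
          (lt_of_lt_of_le hdq (min_le_left _ _))
          (lt_of_le_of_lt hrτ (lt_of_lt_of_le hdτ (min_le_left _ _)))
      have := (convex_uIcc τ τ').norm_image_sub_le_of_norm_hasDerivWithin_le hder hbd
        (Set.left_mem_uIcc (a := τ) (b := τ')) (Set.right_mem_uIcc (a := τ) (b := τ'))
      rw [Real.norm_eq_abs, Real.norm_eq_abs] at this
      calc |𝒰 q' τ' - 𝒰 q' τ - Ut q τ * (τ' - τ)|
          = |(𝒰 q' τ' - Ut q τ * τ') - (𝒰 q' τ - Ut q τ * τ)| := by ring_nf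
        _ ≤ ε * |τ' - τ| := this
    set Q : ℕ → Fin n → ℝ := fun k i => if (i : ℕ) < k then q' i else q i with hQdef
    have hQ0 : Q 0 = q := funext fun i => if_neg (Nat.not_lt_zero _)
    have hQn : Q n = q' := funext fun i => if_pos i.isLt
    have hQcoord : ∀ k i, dist (Q k i) (q i) ≤ dist q' q := by
      intro k i
      by_cases h : (i : ℕ) < k
      · simp only [hQdef, if_pos h]; exact dist_le_pi_dist q' q i
      · simp only [hQdef, if_neg h, dist_self]; exact dist_nonneg
    have hstep : ∀ (k : ℕ) (hk : k < n),
        |𝒰 (Q (k+1)) τ - 𝒰 (Q k) τ - Up ⟨k, hk⟩ q τ * (q' ⟨k, hk⟩ - q ⟨k, hk⟩)|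
          ≤ ε * |q' ⟨k, hk⟩ - q ⟨k, hk⟩| := by
      intro k hk
      set ik : Fin n := ⟨k, hk⟩ with hikdef
      have hQsucc : Q (k+1) = Function.update (Q k) ik (q' ik) := by
        funext i
        rw [Function.update_apply]
        by_cases h : i = ik
        · subst h; simp [hQdef, hikdef]
        · have hik : (i : ℕ) ≠ k := fun hh => h (Fin.ext hh)
          rw [if_neg h]
          show (if (i : ℕ) < k + 1 then q' i else q i) = (if (i : ℕ) < k then q' i else q i)
          exact if_congr (by omega) rfl rfl
      have hQkik : Q k ik = q ik := by simp [hQdef, hikdef]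
      set s : Set ℝ := Set.uIcc (q ik) (q' ik) with hsdef
      have hPmem : ∀ y ∈ s, ∀ i, dist (Function.update (Q k) ik y i) (q i) ≤ dist q' q := by
        intro y hy i
        by_cases h : i = ik
        · subst h
          rw [Function.update_self]
          have h1 : dist y (q ik) ≤ dist (q ik) (q' ik) :=
            Real.dist_le_of_mem_uIcc hy (Set.left_mem_uIcc (a := q ik) (b := q' ik))
          rw [dist_comm (q ik) (q' ik)] at h1
          exact le_trans h1 (dist_le_pi_dist q' q ik)
        · rw [Function.update_of_ne h]; exact hQcoord k i
      have hders : ∀ y ∈ s,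
          HasDerivWithinAt (fun y => 𝒰 (Function.update (Q k) ik y) τ - Up ik q τ * y)
            (Up ik (Function.update (Q k) ik y) τ - Up ik q τ) s y := by
        intro y hy
        obtain ⟨hPO, hPδ⟩ := hmemO (Function.update (Q k) ik y) (hPmem y hy)
        have h1 := hUp (Function.update (Q k) ik y) hPO τ hτ ik
        have h2 : Function.update (Function.update (Q k) ik y) ik
            = Function.update (Q k) ik := by
          funext y' i; rw [Function.update_idem]
        have h3 : Function.update (Q k) ik y ik = y := Function.update_self ik y (Q k)
        rw [h2, h3] at h1
        have h4 : HasDerivAt (fun y' : ℝ => Up ik q τ * y') (Up ik q τ) y := by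
          simpa using (hasDerivAt_id y).const_mul (Up ik q τ)
        exact (h1.sub h4).hasDerivWithinAt
      have hbds : ∀ y ∈ s,
          ‖Up ik (Function.update (Q k) ik y) τ - Up ik q τ‖ ≤ ε := by
        intro y hy
        obtain ⟨hPO, hPδ⟩ := hmemO (Function.update (Q k) ik y) (hPmem y hy)
        exact hUpclose ik (Function.update (Q k) ik y) τ hPO hτ
          (lt_of_lt_of_le hPδ (min_le_left _ _))
          (by rw [dist_self]; exact hδ₁pos)
      have := (convex_uIcc (q ik) (q' ik)).norm_image_sub_le_of_norm_hasDerivWithin_le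
        hders hbds (Set.left_mem_uIcc (a := q ik) (b := q' ik))
        (Set.right_mem_uIcc (a := q ik) (b := q' ik))
      rw [Real.norm_eq_abs, Real.norm_eq_abs] at this
      have hupd_self : Function.update (Q k) ik (q ik) = Q k := by
        rw [← hQkik]; exact Function.update_eq_self ik (Q k)
      calc |𝒰 (Q (k+1)) τ - 𝒰 (Q k) τ - Up ik q τ * (q' ik - q ik)|
          = |(𝒰 (Function.update (Q k) ik (q' ik)) τ - Up ik q τ * q' ik)
              - (𝒰 (Function.update (Q k) ik (q ik)) τ - Up ik q τ * q ik)| := by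
            rw [hQsucc, hupd_self]; ring_nf
        _ ≤ ε * |q' ik - q ik| := this
    have htel : 𝒰 q' τ - 𝒰 q τ = ∑ k ∈ range n, (𝒰 (Q (k+1)) τ - 𝒰 (Q k) τ) := by
      rw [Finset.sum_range_sub (fun k => 𝒰 (Q k) τ), hQ0, hQn]
    have hsum : ∑ i : Fin n, Up i q τ * (q' i - q i)
        = ∑ k ∈ range n, (if h : k < n then Up ⟨k, h⟩ q τ * (q' ⟨k, h⟩ - q ⟨k, h⟩) else 0) := by
      rw [← Fin.sum_univ_eq_sum_range]
      exact Finset.sum_congr rfl fun i _ => by simp [i.isLt]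
    have hB : |𝒰 q' τ - 𝒰 q τ - ∑ i : Fin n, Up i q τ * (q' i - q i)|
        ≤ (n : ℝ) * ε * dist q' q := by
      rw [htel, hsum, ← Finset.sum_sub_distrib]
      refine le_trans (Finset.abs_sum_le_sum_abs _ _) ?_
      have : ∀ k ∈ range n,
          |𝒰 (Q (k+1)) τ - 𝒰 (Q k) τ -
            (if h : k < n then Up ⟨k, h⟩ q τ * (q' ⟨k, h⟩ - q ⟨k, h⟩) else 0)|
          ≤ ε * dist q' q := by
        intro k hk
        have hk' := Finset.mem_range.1 hk
        rw [dif_pos hk']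
        refine le_trans (hstep k hk') ?_
        have : |q' ⟨k, hk'⟩ - q ⟨k, hk'⟩| ≤ dist q' q := by
          rw [← Real.dist_eq]; exact dist_le_pi_dist q' q _
        exact mul_le_mul_of_nonneg_left this hε.le
      refine le_trans (Finset.sum_le_sum this) ?_
      rw [Finset.sum_const, Finset.card_range, nsmul_eq_mul]
      ring_nf; exact le_rfl
    have happ : (((∑ i, Up i q τ • ((ContinuousLinearMap.proj i : (Fin n → ℝ) →L[ℝ] ℝ).comp
          (ContinuousLinearMap.fst ℝ (Fin n → ℝ) ℝ))) +
        Ut q τ • ContinuousLinearMap.snd ℝ (Fin n → ℝ) ℝ) ((q', τ') - (q, τ)))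
        = (∑ i : Fin n, Up i q τ * (q' i - q i)) + Ut q τ * (τ' - τ) := by
      simp [ContinuousLinearMap.sum_apply, Prod.sub_def]
    rw [happ]
    have hw1 : dist q' q ≤ ‖((q', τ') - (q, τ) : (Fin n → ℝ) × ℝ)‖ := by
      rw [← dist_eq_norm, Prod.dist_eq]; exact le_max_left _ _
    have hw2 : |τ' - τ| ≤ ‖((q', τ') - (q, τ) : (Fin n → ℝ) × ℝ)‖ := by
      rw [← Real.dist_eq, ← dist_eq_norm, Prod.dist_eq]; exact le_max_right _ _
    calc ‖𝒰 q' τ' - 𝒰 q τ - ((∑ i : Fin n, Up i q τ * (q' i - q i)) + Ut q τ * (τ' - τ))‖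
        = |(𝒰 q' τ' - 𝒰 q' τ - Ut q τ * (τ' - τ))
            + (𝒰 q' τ - 𝒰 q τ - ∑ i : Fin n, Up i q τ * (q' i - q i))| := by
          rw [Real.norm_eq_abs]; congr 1; ring
      _ ≤ |𝒰 q' τ' - 𝒰 q' τ - Ut q τ * (τ' - τ)|
            + |𝒰 q' τ - 𝒰 q τ - ∑ i : Fin n, Up i q τ * (q' i - q i)| := abs_add_le _ _
      _ ≤ ε * |τ' - τ| + (n : ℝ) * ε * dist q' q := add_le_add hA hB
      _ ≤ ε * ‖((q', τ') - (q, τ) : (Fin n → ℝ) × ℝ)‖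
            + (n : ℝ) * ε * ‖((q', τ') - (q, τ) : (Fin n → ℝ) × ℝ)‖ := by
          gcongr
      _ = ((n : ℝ) + 1) * ε * ‖((q', τ') - (q, τ) : (Fin n → ℝ) × ℝ)‖ := by ring
      _ = c * ‖((q', τ') - (q, τ) : (Fin n → ℝ) × ℝ)‖ := by
          rw [hεdef]; field_simp
  filter_upwards [self_mem_nhdsWithin,
    nhdsWithin_le_nhds (Metric.ball_mem_nhds ((q, τ) : (Fin n → ℝ) × ℝ) hδpos)]
    with z hz hball
  exact main z hz (Metric.mem_ball.1 hball)

/-- Chain rule + FTC along an admissible curve. -/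
lemma mfg_main {G : (Fin n → ℝ) → ℝ} {t : ℝ} (hO : IsOpen O)
    (hUt : ∀ p ∈ O, ∀ s ≤ T, HasDerivAt (fun r => 𝒰 p r) (Ut p s) s)
    (hUp : ∀ p ∈ O, ∀ s ≤ T, ∀ i,
      HasDerivAt (fun y => 𝒰 (Function.update p i y) s) (Up i p s) (p i))
    (hUtc : ContinuousOn (fun q : (Fin n → ℝ) × ℝ => Ut q.1 q.2) (O ×ˢ Set.Iic T))
    (hUpc : ∀ i, ContinuousOn (fun q : (Fin n → ℝ) × ℝ => Up i q.1 q.2) (O ×ˢ Set.Iic T))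
    (hterm : ∀ p ∈ O, 𝒰 p T = G p)
    (htT : t ≤ T)
    {p : ℝ → Fin n → ℝ} {V : ℝ → Fin n → ℝ}
    (hpO : ∀ s ∈ Set.Icc t T, p s ∈ O)
    (hpd : ∀ s ∈ Set.Icc t T, ∀ i,
      HasDerivWithinAt (fun r => p r i) (V s i) (Set.Icc t T) s)
    (hVc : ∀ i, ContinuousOn (fun s => V s i) (Set.Icc t T)) :
    ContinuousOn (fun s => Ut (p s) s + ∑ i, Up i (p s) s * V s i) (Set.Icc t T) ∧
    ∫ s in t..T, (Ut (p s) s + ∑ i, Up i (p s) s * V s i) = G (p T) - 𝒰 (p t) t := by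
  have hpc : ContinuousOn (fun r => p r) (Set.Icc t T) :=
    continuousOn_pi.2 fun i s hs => (hpd s hs i).continuousWithinAt
  have hmaps2 : Set.MapsTo (fun r => ((p r, r) : (Fin n → ℝ) × ℝ)) (Set.Icc t T)
      (O ×ˢ Set.Iic T) := fun r hr => ⟨hpO r hr, hr.2⟩
  have hφc : ContinuousOn (fun s => Ut (p s) s + ∑ i, Up i (p s) s * V s i)
      (Set.Icc t T) := by
    refine ContinuousOn.add ?_ ?_
    · exact hUtc.comp (hpc.prodMk (continuousOn_id)) hmaps2
    · refine continuousOn_finset_sum _ fun i _ => ?_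
      exact ((hUpc i).comp (hpc.prodMk (continuousOn_id)) hmaps2).mul (hVc i)
  have hgderiv : ∀ s ∈ Set.Icc t T,
      HasDerivWithinAt (fun r => 𝒰 (p r) r)
        (Ut (p s) s + ∑ i, Up i (p s) s * V s i) (Set.Icc t T) s := by
    intro s hs
    have hF := mfg_U_fderiv hO hUt hUp hUtc hUpc (hpO s hs) hs.2
    have hcurve : HasDerivWithinAt (fun r => ((p r, r) : (Fin n → ℝ) × ℝ))
        ((V s, 1)) (Set.Icc t T) s :=
      HasDerivWithinAt.prodMk (hasDerivWithinAt_pi.2 (hpd s hs)) (hasDerivWithinAt_id s _)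
    have hmaps : Set.MapsTo (fun r => ((p r, r) : (Fin n → ℝ) × ℝ)) (Set.Icc t T)
        ((Set.univ : Set (Fin n → ℝ)) ×ˢ Set.Iic T) := fun r hr => ⟨trivial, hr.2⟩
    have := hF.comp_hasDerivWithinAt_of_eq s hcurve hmaps rfl
    refine this.congr_deriv ?_
    simp [ContinuousLinearMap.sum_apply]
    ring
  have hgcont : ContinuousOn (fun r => 𝒰 (p r) r) (Set.Icc t T) :=
    fun s hs => (hgderiv s hs).continuousWithinAt
  refine ⟨hφc, ?_⟩
  have := intervalIntegral.integral_eq_sub_of_hasDeriv_right_of_le htT hgcont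
    (fun x hx => ((hgderiv x (Set.Ioo_subset_Icc_self hx)).hasDerivAt
      (Icc_mem_nhds hx.1 hx.2)).hasDerivWithinAt)
    (hφc.intervalIntegrable_of_Icc htT)
  rw [this, hterm (p T) (hpO T ⟨htT, le_rfl⟩)]

end UDeriv

/-- Verification theorem for the functional Hamilton–Jacobi equation on the finite probability
simplex: a `C¹` solution `𝒰` of
`∂_t 𝒰 + (1/2) ∑_{(i,j)∈E} H_{ij}((∇̄_ω ∇_p 𝒰)_{ij}) θ_{ij}(p) + ℱ(p) = 0`, `𝒰(·,T) = 𝒢`,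
dominates the payoff of every admissible controlled curve (a), and the payoff of the curve
driven by the feedback control `v*_{ij} = H'_{ij}((∇̄_ω ∇_p 𝒰)_{ij})` equals `𝒰(p₀,t)` (b);
hence `𝒰` is the value function of the discrete potential mean field game. -/
theorem discrete_HJE_verification
    (n : ℕ) (ω : Fin n → Fin n → ℝ)
    (O : Set (Fin n → ℝ)) (hO : IsOpen O)
    (θij : Fin n → Fin n → (Fin n → ℝ) → ℝ)
    (L H H' : Fin n → Fin n → ℝ → ℝ)
    (F G : (Fin n → ℝ) → ℝ)
    (T : ℝ) (𝒰 Ut : (Fin n → ℝ) → ℝ → ℝ)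
    (Up : Fin n → (Fin n → ℝ) → ℝ → ℝ)
    (t : ℝ) (p0 : Fin n → ℝ)
    (hωsym : ∀ i j, ω i j = ω j i)
    (hωnonneg : ∀ i j, i ≠ j → 0 ≤ ω i j)
    (hθsym : ∀ i j p, θij i j p = θij j i p)
    (hθnonneg : ∀ i j, ∀ p ∈ O, 0 ≤ θij i j p)
    (hθC1 : ∀ i j, ContDiffOn ℝ 1 (θij i j) O)
    (hLeven : ∀ i j a, L i j (-a) = L i j a)
    (hLconv : ∀ i j, StrictConvexOn ℝ Set.univ (L i j))
    (hLsuper : ∀ i j (c : ℝ), ∃ b : ℝ, ∀ a : ℝ, c * |a| - b ≤ L i j a)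
    (hL0 : ∀ i j, L i j 0 = 0)
    (hLsym : ∀ i j, L i j = L j i)
    -- `H_{ij}` is the differentiable convex conjugate of `L_{ij}`: Fenchel–Young inequality
    -- with equality at `v = H'_{ij}(a)`.
    (hFY : ∀ i j (v a : ℝ), v * a - H i j a ≤ L i j v)
    (hFYeq : ∀ i j (a : ℝ), L i j (H' i j a) = H' i j a * a - H i j a)
    (hH' : ∀ i j a, HasDerivAt (H i j) (H' i j a) a)
    (hFC1 : ContDiffOn ℝ 1 F O) (hGC1 : ContDiffOn ℝ 1 G O)
    -- `𝒰` is continuously differentiable on `O × (−∞, T]`, with partial derivatives `Ut`, `Up`.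
    (hUt : ∀ p ∈ O, ∀ s ≤ T, HasDerivAt (fun r => 𝒰 p r) (Ut p s) s)
    (hUp : ∀ p ∈ O, ∀ s ≤ T, ∀ i,
      HasDerivAt (fun y => 𝒰 (Function.update p i y) s) (Up i p s) (p i))
    (hUtc : ContinuousOn (fun q : (Fin n → ℝ) × ℝ => Ut q.1 q.2) (O ×ˢ Set.Iic T))
    (hUpc : ∀ i, ContinuousOn (fun q : (Fin n → ℝ) × ℝ => Up i q.1 q.2) (O ×ˢ Set.Iic T))
    -- `𝒰` solves the functional Hamilton–Jacobi equation with terminal datum `𝒢`.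
    (hHJE : ∀ p ∈ O, ∀ s ≤ T,
      Ut p s + (1/2) * ∑ i, ∑ j ∈ mfgNbr n ω i,
          H i j (Real.sqrt (ω i j) * (Up j p s - Up i p s)) * θij i j p
        + F p = 0)
    (hterm : ∀ p ∈ O, 𝒰 p T = G p)
    (htT : t ≤ T) (hp0 : p0 ∈ O) :
    -- (a) the payoff of any admissible pair `(p, v)` is at most `𝒰(p₀, t)`.
    (∀ (p : ℝ → Fin n → ℝ) (v : ℝ → Fin n → Fin n → ℝ),
      (∀ i, p t i = p0 i) →
      (∀ s ∈ Set.Icc t T, p s ∈ O ∧ (∀ i, 0 ≤ p s i) ∧ ∑ i, p s i = 1) →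
      (∀ s ∈ Set.Icc t T, ∀ i j, j ≠ i → 0 < ω i j → v s i j = -v s j i) →
      (∀ i j, ContinuousOn (fun s => v s i j) (Set.Icc t T)) →
      (∀ s ∈ Set.Icc t T, ∀ i, HasDerivWithinAt (fun r => p r i)
        (-(∑ j ∈ mfgNbr n ω i, Real.sqrt (ω i j) * θij i j (p s) * v s i j))
        (Set.Icc t T) s) →
      G (p T) - ∫ s in t..T,
          ((1/2) * ∑ i, ∑ j ∈ mfgNbr n ω i, θij i j (p s) * L i j (v s i j) - F (p s))
        ≤ 𝒰 p0 t) ∧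
    -- (b) the payoff of an admissible curve driven by the feedback control equals `𝒰(p₀, t)`.
    (∀ p : ℝ → Fin n → ℝ,
      (∀ i, p t i = p0 i) →
      (∀ s ∈ Set.Icc t T, p s ∈ O ∧ (∀ i, 0 ≤ p s i) ∧ ∑ i, p s i = 1) →
      (∀ s ∈ Set.Icc t T, ∀ i, HasDerivWithinAt (fun r => p r i)
        (-(∑ j ∈ mfgNbr n ω i, Real.sqrt (ω i j) * θij i j (p s) *
            H' i j (Real.sqrt (ω i j) * (Up j (p s) s - Up i (p s) s))))
        (Set.Icc t T) s) →
      G (p T) - ∫ s in t..T,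
          ((1/2) * ∑ i, ∑ j ∈ mfgNbr n ω i, θij i j (p s) *
              L i j (H' i j (Real.sqrt (ω i j) * (Up j (p s) s - Up i (p s) s)))
            - F (p s))
        = 𝒰 p0 t) := by
  constructor
  · -- part (a)
    rintro p v hp0i hadm hvanti hvc hpd
    have hpO : ∀ s ∈ Set.Icc t T, p s ∈ O := fun s hs => (hadm s hs).1
    have hpc : ContinuousOn (fun r => p r) (Set.Icc t T) :=
      continuousOn_pi.2 fun i s hs => (hpd s hs i).continuousWithinAt
    have hpmaps : Set.MapsTo p (Set.Icc t T) O := fun s hs => hpO s hs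
    have hVc : ∀ i, ContinuousOn
        (fun s => -(∑ j ∈ mfgNbr n ω i, Real.sqrt (ω i j) * θij i j (p s) * v s i j))
        (Set.Icc t T) := by
      intro i
      refine ContinuousOn.neg (continuousOn_finset_sum _ fun j _ => ?_)
      exact (continuousOn_const.mul (((hθC1 i j).continuousOn).comp hpc hpmaps)).mul (hvc i j)
    obtain ⟨hφc, hint⟩ := mfg_main (V := fun s i =>
        -(∑ j ∈ mfgNbr n ω i, Real.sqrt (ω i j) * θij i j (p s) * v s i j))
      hO hUt hUp hUtc hUpc hterm htT hpO hpd hVc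
    have hpt : p t = p0 := funext hp0i
    rw [hpt] at hint
    have hle : ∀ s ∈ Set.Icc t T,
        Ut (p s) s + ∑ i, Up i (p s) s *
            (-(∑ j ∈ mfgNbr n ω i, Real.sqrt (ω i j) * θij i j (p s) * v s i j))
          ≤ (1/2) * ∑ i, ∑ j ∈ mfgNbr n ω i, θij i j (p s) * L i j (v s i j) - F (p s) := by
      intro s hs
      have hsym := mfg_sym_sum hωsym (fun i => Up i (p s) s) (fun i j => θij i j (p s))
        (fun i j => v s i j) (fun i j => hθsym i j (p s))
        (fun i j hne hpos => hvanti s hs i j hne hpos)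
      have hHJE' := hHJE (p s) (hpO s hs) s hs.2
      have htermle : ∀ i, ∀ j ∈ mfgNbr n ω i,
          θij i j (p s) * (v s i j * (Real.sqrt (ω i j) * (Up j (p s) s - Up i (p s) s)))
          ≤ θij i j (p s) * L i j (v s i j)
            + H i j (Real.sqrt (ω i j) * (Up j (p s) s - Up i (p s) s)) * θij i j (p s) := by
        intro i j hj
        have hθ0 := hθnonneg i j (p s) (hpO s hs)
        have hfy := hFY i j (v s i j) (Real.sqrt (ω i j) * (Up j (p s) s - Up i (p s) s))
        nlinarith [mul_le_mul_of_nonneg_left hfy hθ0]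
      have h1 : ∑ i, ∑ j ∈ mfgNbr n ω i,
          θij i j (p s) * (v s i j * (Real.sqrt (ω i j) * (Up j (p s) s - Up i (p s) s)))
          ≤ ∑ i, ∑ j ∈ mfgNbr n ω i, (θij i j (p s) * L i j (v s i j)
            + H i j (Real.sqrt (ω i j) * (Up j (p s) s - Up i (p s) s)) * θij i j (p s)) :=
        Finset.sum_le_sum fun i _ => Finset.sum_le_sum (htermle i)
      have h2 : ∑ i, ∑ j ∈ mfgNbr n ω i, (θij i j (p s) * L i j (v s i j)
            + H i j (Real.sqrt (ω i j) * (Up j (p s) s - Up i (p s) s)) * θij i j (p s))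
          = (∑ i, ∑ j ∈ mfgNbr n ω i, θij i j (p s) * L i j (v s i j))
            + ∑ i, ∑ j ∈ mfgNbr n ω i,
              H i j (Real.sqrt (ω i j) * (Up j (p s) s - Up i (p s) s)) * θij i j (p s) := by
        simp only [Finset.sum_add_distrib]
      rw [h2] at h1
      rw [hsym]
      linarith
    have hcint : IntervalIntegrable (fun s => (1/2) * ∑ i, ∑ j ∈ mfgNbr n ω i,
        θij i j (p s) * L i j (v s i j) - F (p s)) MeasureTheory.volume t T := by
      refine ContinuousOn.intervalIntegrable_of_Icc htT ?_
      refine ContinuousOn.sub (ContinuousOn.mul continuousOn_const ?_)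
        ((hFC1.continuousOn).comp hpc hpmaps)
      refine continuousOn_finset_sum _ fun i _ => continuousOn_finset_sum _ fun j _ => ?_
      have hLc : Continuous (L i j) := by
        exact continuousOn_univ.mp
          (((hLconv i j).convexOn).continuousOn isOpen_univ)
      exact (((hθC1 i j).continuousOn).comp hpc hpmaps).mul (hLc.comp_continuousOn (hvc i j))
    have hmono := intervalIntegral.integral_mono_on htT
      (hφc.intervalIntegrable_of_Icc htT) hcint hle
    linarith
  · -- part (b)
    rintro p hp0i hadm hpd
    have hpO : ∀ s ∈ Set.Icc t T, p s ∈ O := fun s hs => (hadm s hs).1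
    have hpc : ContinuousOn (fun r => p r) (Set.Icc t T) :=
      continuousOn_pi.2 fun i s hs => (hpd s hs i).continuousWithinAt
    have hpmaps : Set.MapsTo p (Set.Icc t T) O := fun s hs => hpO s hs
    have hmaps2 : Set.MapsTo (fun r => ((p r, r) : (Fin n → ℝ) × ℝ)) (Set.Icc t T)
        (O ×ˢ Set.Iic T) := fun r hr => ⟨hpO r hr, hr.2⟩
    -- symmetry and oddness of `H'`
    have hkey : ∀ (i j : Fin n) (a : ℝ), H' j i (-a) = - H' i j a := by
      intro i j a
      have h1 : ∀ x, H i j x ≤ H j i x :=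
        mfg_H_le (fun v x => by have := hFY j i v x; rwa [← hLsym i j] at this) (hFYeq i j)
      have h2 : ∀ x, H j i x ≤ H i j x :=
        mfg_H_le (fun v x => by have := hFY i j v x; rwa [hLsym i j] at this) (hFYeq j i)
      have hHeq : H i j = H j i := funext fun x => le_antisymm (h1 x) (h2 x)
      have hH'eq : H' j i (-a) = H' i j (-a) := by
        have hd := hH' i j (-a)
        rw [hHeq] at hd
        exact (hH' j i (-a)).unique hd
      have hodd := mfg_H'_odd (hH' i j)
        (mfg_H_even (fun x => hLeven i j x) (hFY i j) (hFYeq i j)) a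
      rw [hH'eq, hodd]
    have hH'c : ∀ i j, Continuous (H' i j) := fun i j =>
      mfg_H'_cont (hH' i j) (mfg_H'_mono (hFY i j) (hFYeq i j))
    have hac : ∀ i j : Fin n, ContinuousOn
        (fun s => Real.sqrt (ω i j) * (Up j (p s) s - Up i (p s) s)) (Set.Icc t T) := by
      intro i j
      exact continuousOn_const.mul
        (((hUpc j).comp (hpc.prodMk continuousOn_id) hmaps2).sub
          ((hUpc i).comp (hpc.prodMk continuousOn_id) hmaps2))
    have hVc : ∀ i, ContinuousOn
        (fun s => -(∑ j ∈ mfgNbr n ω i, Real.sqrt (ω i j) * θij i j (p s) *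
          H' i j (Real.sqrt (ω i j) * (Up j (p s) s - Up i (p s) s)))) (Set.Icc t T) := by
      intro i
      refine ContinuousOn.neg (continuousOn_finset_sum _ fun j _ => ?_)
      exact (continuousOn_const.mul (((hθC1 i j).continuousOn).comp hpc hpmaps)).mul
        ((hH'c i j).comp_continuousOn (hac i j))
    obtain ⟨hφc, hint⟩ := mfg_main (V := fun s i =>
        -(∑ j ∈ mfgNbr n ω i, Real.sqrt (ω i j) * θij i j (p s) *
          H' i j (Real.sqrt (ω i j) * (Up j (p s) s - Up i (p s) s))))
      hO hUt hUp hUtc hUpc hterm htT hpO hpd hVc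
    have hpt : p t = p0 := funext hp0i
    rw [hpt] at hint
    have heq : ∀ s ∈ Set.Icc t T,
        Ut (p s) s + ∑ i, Up i (p s) s *
            (-(∑ j ∈ mfgNbr n ω i, Real.sqrt (ω i j) * θij i j (p s) *
              H' i j (Real.sqrt (ω i j) * (Up j (p s) s - Up i (p s) s))))
          = (1/2) * ∑ i, ∑ j ∈ mfgNbr n ω i, θij i j (p s) *
              L i j (H' i j (Real.sqrt (ω i j) * (Up j (p s) s - Up i (p s) s)))
            - F (p s) := by
      intro s hs
      have hsym := mfg_sym_sum hωsym (fun i => Up i (p s) s) (fun i j => θij i j (p s))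
        (fun i j => H' i j (Real.sqrt (ω i j) * (Up j (p s) s - Up i (p s) s)))
        (fun i j => hθsym i j (p s))
        (fun i j hne hpos => by
          show H' i j (Real.sqrt (ω i j) * (Up j (p s) s - Up i (p s) s))
            = -H' j i (Real.sqrt (ω j i) * (Up i (p s) s - Up j (p s) s))
          have hω : Real.sqrt (ω j i) * (Up i (p s) s - Up j (p s) s)
              = -(Real.sqrt (ω i j) * (Up j (p s) s - Up i (p s) s)) := by
            rw [hωsym j i]; ring
          rw [hω, hkey i j]; ring)
      have hHJE' := hHJE (p s) (hpO s hs) s hs.2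
      have htermeq : ∀ i j : Fin n,
          θij i j (p s) * (H' i j (Real.sqrt (ω i j) * (Up j (p s) s - Up i (p s) s)) *
            (Real.sqrt (ω i j) * (Up j (p s) s - Up i (p s) s)))
          = θij i j (p s) *
              L i j (H' i j (Real.sqrt (ω i j) * (Up j (p s) s - Up i (p s) s)))
            + H i j (Real.sqrt (ω i j) * (Up j (p s) s - Up i (p s) s)) * θij i j (p s) := by
        intro i j
        rw [hFYeq i j]; ring
      have h1 : ∑ i, ∑ j ∈ mfgNbr n ω i,
          θij i j (p s) * (H' i j (Real.sqrt (ω i j) * (Up j (p s) s - Up i (p s) s)) *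
            (Real.sqrt (ω i j) * (Up j (p s) s - Up i (p s) s)))
          = (∑ i, ∑ j ∈ mfgNbr n ω i, θij i j (p s) *
              L i j (H' i j (Real.sqrt (ω i j) * (Up j (p s) s - Up i (p s) s))))
            + ∑ i, ∑ j ∈ mfgNbr n ω i,
              H i j (Real.sqrt (ω i j) * (Up j (p s) s - Up i (p s) s)) * θij i j (p s) := by
        rw [← Finset.sum_add_distrib]
        refine Finset.sum_congr rfl fun i _ => ?_
        rw [← Finset.sum_add_distrib]
        exact Finset.sum_congr rfl fun j _ => htermeq i j
      rw [hsym, h1]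
      linarith
    have hcongr : (∫ s in t..T,
        ((1/2) * ∑ i, ∑ j ∈ mfgNbr n ω i, θij i j (p s) *
            L i j (H' i j (Real.sqrt (ω i j) * (Up j (p s) s - Up i (p s) s)))
          - F (p s)))
        = ∫ s in t..T, (Ut (p s) s + ∑ i, Up i (p s) s *
            (-(∑ j ∈ mfgNbr n ω i, Real.sqrt (ω i j) * θij i j (p s) *
              H' i j (Real.sqrt (ω i j) * (Up j (p s) s - Up i (p s) s))))) := by
      refine intervalIntegral.integral_congr fun s hs => ?_
      rw [Set.uIcc_of_le htT] at hs
      exact (heq s hs).symm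
    rw [hcongr, hint]
    ring

end DiscreteHJEVerification
end

section
/- Master equation for potential mean field games on finite states: let 𝒰 be twice continuously differentiable on O × (−∞, T] and solve the Hamilton–Jacobi equation ∂_t 𝒰(p,t) + (1/2) ∑_{(i,j)∈E} H_{ij}( (∇̄_ω ∇_p 𝒰(p,t))_{i,j} ) θ_{ij}(p) + ℱ(p) = 0 for t ≤ T with 𝒰(p,T) = 𝒢(p). Define u_i(p,t) := (∂/∂p_i) 𝒰(p,t). Then u = (u_i) satisfies, for every i, every p ∈ O, and every t ≤ T: ∂_t u_i(p,t) + ∑_{j∈N_i} H_{ij}( (∇̄_ω u(p,t))_{i,j} ) (∂θ_{ij}/∂p_i)(p) + (∂ℱ/∂p_i)(p) + (1/2) ∑_{(j,k)∈E} H'_{jk}( (∇̄_ω u(p,t))_{j,k} ) √(ω_{jk}) ( ∂u_i/∂p_k − ∂u_i/∂p_j )(p,t) θ_{jk}(p) = 0, with terminal condition u_i(p,T) = (∂/∂p_i) 𝒢(p). -/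
open Finset

noncomputable section DiscreteMasterPotential

/-- Master equation for potential mean field games on finite states: if `𝒰` is a `C²` solution
of the Hamilton–Jacobi equation
`∂_t 𝒰 + (1/2) ∑_{(i,j)∈E} H_{ij}((∇̄_ω ∇_p 𝒰)_{ij}) θ_{ij}(p) + ℱ(p) = 0`, `𝒰(·,T) = 𝒢`,
then `u_i := ∂𝒰/∂p_i` solves the discrete master equation with terminal datum `∂𝒢/∂p_i`.
The `C²` regularity of `𝒰` is encoded by the given first and second partial derivatives
`Ut, Up, Upp, Utp` together with the symmetry of second derivatives. -/
theorem discrete_master_equation_potential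
    (n : ℕ) (ω : Fin n → Fin n → ℝ) (π : Fin n → ℝ)
    (O : Set (Fin n → ℝ)) (hO : IsOpen O) (hOpos : ∀ p ∈ O, ∀ i, 0 < p i)
    (θ θ₁ : ℝ → ℝ → ℝ)
    (H H' : Fin n → Fin n → ℝ → ℝ)
    (F G : (Fin n → ℝ) → ℝ) (F' G' : Fin n → (Fin n → ℝ) → ℝ)
    (T : ℝ) (𝒰 Ut : (Fin n → ℝ) → ℝ → ℝ)
    (Up : Fin n → (Fin n → ℝ) → ℝ → ℝ)
    (Upp : Fin n → Fin n → (Fin n → ℝ) → ℝ → ℝ)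
    (Utp : Fin n → (Fin n → ℝ) → ℝ → ℝ)
    (hωsym : ∀ i j, ω i j = ω j i)
    (hωnonneg : ∀ i j, i ≠ j → 0 ≤ ω i j)
    (hπ : ∀ i, 0 < π i)
    (hθsym : ∀ x y, θ x y = θ y x)
    (hθ₁ : ∀ x y : ℝ, 0 < x → 0 < y → HasDerivAt (fun z => θ z y) (θ₁ x y) x)
    (hH' : ∀ i j a, HasDerivAt (H i j) (H' i j a) a)
    (hH'c : ∀ i j, Continuous (H' i j))
    (hHeven : ∀ i j a, H i j (-a) = H i j a)
    (hHsym : ∀ i j, H i j = H j i)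
    (hF' : ∀ p ∈ O, ∀ i, HasDerivAt (fun y => F (Function.update p i y)) (F' i p) (p i))
    (hG' : ∀ p ∈ O, ∀ i, HasDerivAt (fun y => G (Function.update p i y)) (G' i p) (p i))
    -- first partial derivatives of `𝒰`
    (hUt : ∀ p ∈ O, ∀ t ≤ T, HasDerivAt (fun r => 𝒰 p r) (Ut p t) t)
    (hUp : ∀ p ∈ O, ∀ t ≤ T, ∀ i,
      HasDerivAt (fun y => 𝒰 (Function.update p i y) t) (Up i p t) (p i))
    -- second partial derivatives of `𝒰` and their symmetry (Schwarz)
    (hUpp : ∀ p ∈ O, ∀ t ≤ T, ∀ i k,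
      HasDerivAt (fun y => Up i (Function.update p k y) t) (Upp i k p t) (p k))
    (hUppSym : ∀ p ∈ O, ∀ t ≤ T, ∀ i k, Upp i k p t = Upp k i p t)
    (hUtp : ∀ p ∈ O, ∀ t ≤ T, ∀ i,
      HasDerivAt (fun y => Ut (Function.update p i y) t) (Utp i p t) (p i))
    (hUpt : ∀ p ∈ O, ∀ t ≤ T, ∀ i,
      HasDerivAt (fun r => Up i p r) (Utp i p t) t)
    -- `𝒰` solves the Hamilton–Jacobi equation with terminal datum `𝒢`
    (hHJE : ∀ p ∈ O, ∀ t ≤ T,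
      Ut p t + (1/2) * ∑ i, ∑ j ∈ mfgNbr n ω i,
          H i j (Real.sqrt (ω i j) * (Up j p t - Up i p t)) * θ (p i / π i) (p j / π j)
        + F p = 0)
    (hterm : ∀ p ∈ O, 𝒰 p T = G p) :
    -- `u_i = Up i` solves the discrete master equation for potential games
    (∀ p ∈ O, ∀ t ≤ T, ∀ i,
      Utp i p t
        + ∑ j ∈ mfgNbr n ω i,
            H i j (Real.sqrt (ω i j) * (Up j p t - Up i p t)) *
              (θ₁ (p i / π i) (p j / π j) / π i)
        + F' i p
        + (1/2) * ∑ j, ∑ k ∈ mfgNbr n ω j,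
            H' j k (Real.sqrt (ω j k) * (Up k p t - Up j p t)) *
              Real.sqrt (ω j k) * (Upp i k p t - Upp i j p t) *
              θ (p j / π j) (p k / π k)
        = 0) ∧
    (∀ p ∈ O, ∀ i, Up i p T = G' i p) := by
  constructor
  · intro p hp t ht i
    have hupdp : Function.update p i (p i) = p := Function.update_eq_self i p
    have hposi : 0 < p i / π i := div_pos (hOpos p hp i) (hπ i)
    have hcont : Continuous fun y : ℝ => Function.update p i y :=
      continuous_const.update i continuous_id
    have hmem : ∀ᶠ y in nhds (p i), Function.update p i y ∈ O := by
      refine hcont.continuousAt.eventually_mem ?_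
      rw [hupdp]; exact hO.mem_nhds hp
    -- derivative of the θ factor
    have hθd : ∀ j k : Fin n, k ≠ j →
        HasDerivAt (fun y => θ (Function.update p i y j / π j) (Function.update p i y k / π k))
          ((if j = i then θ₁ (p i / π i) (p k / π k) / π i else 0)
            + (if k = i then θ₁ (p i / π i) (p j / π j) / π i else 0)) (p i) := by
      intro j k hkj
      by_cases hji : j = i
      · subst hji
        have hki : k ≠ j := hkj
        have h1 : HasDerivAt (fun z : ℝ => θ z (p k / π k)) (θ₁ (p j / π j) (p k / π k))
            (p j / π j) := hθ₁ _ _ hposi (div_pos (hOpos p hp k) (hπ k))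
        have h2 : HasDerivAt (fun y : ℝ => y / π j) (1 / π j) (p j) :=
          (hasDerivAt_id (p j)).div_const (π j)
        have h3 := h1.comp (p j) h2
        have heq : (fun y => θ (Function.update p j y j / π j) (Function.update p j y k / π k))
            = fun y => θ (y / π j) (p k / π k) := by
          funext y; rw [Function.update_self, Function.update_of_ne hki]
        rw [heq]
        have hval : (if j = j then θ₁ (p j / π j) (p k / π k) / π j else 0)
            + (if k = j then θ₁ (p j / π j) (p j / π j) / π j else 0)
            = θ₁ (p j / π j) (p k / π k) * (1 / π j) := by
          simp [hki, mul_one_div, div_eq_mul_inv]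
        rw [hval]
        simpa [Function.comp_def] using h3
      · by_cases hki : k = i
        · subst hki
          have h1 : HasDerivAt (fun z : ℝ => θ (p j / π j) z) (θ₁ (p k / π k) (p j / π j))
              (p k / π k) := by
            have heq : (fun z : ℝ => θ (p j / π j) z) = fun z => θ z (p j / π j) :=
              funext fun z => hθsym _ _
            rw [heq]
            exact hθ₁ _ _ hposi (div_pos (hOpos p hp j) (hπ j))
          have h2 : HasDerivAt (fun y : ℝ => y / π k) (1 / π k) (p k) :=
            (hasDerivAt_id (p k)).div_const (π k)
          have h3 := h1.comp (p k) h2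
          have heq : (fun y => θ (Function.update p k y j / π j) (Function.update p k y k / π k))
              = fun y => θ (p j / π j) (y / π k) := by
            funext y; rw [Function.update_self, Function.update_of_ne hji]
          rw [heq]
          have hval : (if j = k then θ₁ (p k / π k) (p k / π k) / π k else 0)
              + (if k = k then θ₁ (p k / π k) (p j / π j) / π k else 0)
              = θ₁ (p k / π k) (p j / π j) * (1 / π k) := by
            simp [hji, mul_one_div, div_eq_mul_inv]
          rw [hval]
          simpa [Function.comp_def] using h3
        · have heq : (fun y => θ (Function.update p i y j / π j) (Function.update p i y k / π k))
              = fun _ => θ (p j / π j) (p k / π k) := by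
            funext y; rw [Function.update_of_ne hji, Function.update_of_ne hki]
          rw [heq]
          have hval : (if j = i then θ₁ (p i / π i) (p k / π k) / π i else 0)
              + (if k = i then θ₁ (p i / π i) (p j / π j) / π i else 0) = 0 := by
            simp [hji, hki]
          rw [hval]
          exact hasDerivAt_const _ _
    -- derivative of each product term
    have htermd : ∀ j : Fin n, ∀ k ∈ mfgNbr n ω j,
        HasDerivAt (fun y => H j k (Real.sqrt (ω j k) *
              (Up k (Function.update p i y) t - Up j (Function.update p i y) t)) *
            θ (Function.update p i y j / π j) (Function.update p i y k / π k))
          (H' j k (Real.sqrt (ω j k) * (Up k p t - Up j p t)) *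
              (Real.sqrt (ω j k) * (Upp k i p t - Upp j i p t)) *
              θ (p j / π j) (p k / π k)
            + H j k (Real.sqrt (ω j k) * (Up k p t - Up j p t)) *
              ((if j = i then θ₁ (p i / π i) (p k / π k) / π i else 0)
                + (if k = i then θ₁ (p i / π i) (p j / π j) / π i else 0))) (p i) := by
      intro j k hk
      have hkj : k ≠ j := by
        simp only [mfgNbr, Finset.mem_filter] at hk; exact hk.2.1
      have hin : HasDerivAt (fun y => Real.sqrt (ω j k) *
            (Up k (Function.update p i y) t - Up j (Function.update p i y) t))
          (Real.sqrt (ω j k) * (Upp k i p t - Upp j i p t)) (p i) :=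
        HasDerivAt.const_mul _ ((hUpp p hp t ht k i).sub (hUpp p hp t ht j i))
      have hg1 := (hH' j k (Real.sqrt (ω j k) *
          (Up k (Function.update p i (p i)) t - Up j (Function.update p i (p i)) t))).comp
          (p i) hin
      rw [hupdp] at hg1
      have h2 := hθd j k hkj
      have := hg1.fun_mul h2
      simpa [hupdp, Function.comp_def] using this
    -- derivative of the whole HJE expression
    have hS : HasDerivAt (fun y => ∑ j, ∑ k ∈ mfgNbr n ω j,
          H j k (Real.sqrt (ω j k) *
              (Up k (Function.update p i y) t - Up j (Function.update p i y) t)) *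
            θ (Function.update p i y j / π j) (Function.update p i y k / π k))
        (∑ j, ∑ k ∈ mfgNbr n ω j,
          (H' j k (Real.sqrt (ω j k) * (Up k p t - Up j p t)) *
              (Real.sqrt (ω j k) * (Upp k i p t - Upp j i p t)) *
              θ (p j / π j) (p k / π k)
            + H j k (Real.sqrt (ω j k) * (Up k p t - Up j p t)) *
              ((if j = i then θ₁ (p i / π i) (p k / π k) / π i else 0)
                + (if k = i then θ₁ (p i / π i) (p j / π j) / π i else 0)))) (p i) :=
      HasDerivAt.fun_sum fun j _ => HasDerivAt.fun_sum fun k hk => htermd j k hk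
    have hΦ : HasDerivAt (fun y => Ut (Function.update p i y) t
          + (1/2) * ∑ j, ∑ k ∈ mfgNbr n ω j,
              H j k (Real.sqrt (ω j k) *
                  (Up k (Function.update p i y) t - Up j (Function.update p i y) t)) *
                θ (Function.update p i y j / π j) (Function.update p i y k / π k)
          + F (Function.update p i y))
        (Utp i p t + (1/2) * ∑ j, ∑ k ∈ mfgNbr n ω j,
          (H' j k (Real.sqrt (ω j k) * (Up k p t - Up j p t)) *
              (Real.sqrt (ω j k) * (Upp k i p t - Upp j i p t)) *
              θ (p j / π j) (p k / π k)
            + H j k (Real.sqrt (ω j k) * (Up k p t - Up j p t)) *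
              ((if j = i then θ₁ (p i / π i) (p k / π k) / π i else 0)
                + (if k = i then θ₁ (p i / π i) (p j / π j) / π i else 0)))
          + F' i p) (p i) :=
      ((hUtp p hp t ht i).add (HasDerivAt.const_mul _ hS)).add (hF' p hp i)
    have h0 : HasDerivAt (fun y => Ut (Function.update p i y) t
          + (1/2) * ∑ j, ∑ k ∈ mfgNbr n ω j,
              H j k (Real.sqrt (ω j k) *
                  (Up k (Function.update p i y) t - Up j (Function.update p i y) t)) *
                θ (Function.update p i y j / π j) (Function.update p i y k / π k)
          + F (Function.update p i y)) 0 (p i) := by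
      refine (hasDerivAt_const (p i) (0:ℝ)).congr_of_eventuallyEq ?_
      exact hmem.mono fun y hy => hHJE _ hy t ht
    have hkey := hΦ.unique h0
    -- algebra: split the derivative sum
    have e1 : ∑ j, ∑ k ∈ mfgNbr n ω j,
          (H' j k (Real.sqrt (ω j k) * (Up k p t - Up j p t)) *
              (Real.sqrt (ω j k) * (Upp k i p t - Upp j i p t)) *
              θ (p j / π j) (p k / π k)
            + H j k (Real.sqrt (ω j k) * (Up k p t - Up j p t)) *
              ((if j = i then θ₁ (p i / π i) (p k / π k) / π i else 0)
                + (if k = i then θ₁ (p i / π i) (p j / π j) / π i else 0)))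
        = (∑ j, ∑ k ∈ mfgNbr n ω j,
            H' j k (Real.sqrt (ω j k) * (Up k p t - Up j p t)) *
              Real.sqrt (ω j k) * (Upp i k p t - Upp i j p t) *
              θ (p j / π j) (p k / π k))
          + ∑ j, ∑ k ∈ mfgNbr n ω j,
            H j k (Real.sqrt (ω j k) * (Up k p t - Up j p t)) *
              ((if j = i then θ₁ (p i / π i) (p k / π k) / π i else 0)
                + (if k = i then θ₁ (p i / π i) (p j / π j) / π i else 0)) := by
      rw [← Finset.sum_add_distrib]
      refine Finset.sum_congr rfl fun j _ => ?_
      rw [← Finset.sum_add_distrib]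
      refine Finset.sum_congr rfl fun k _ => ?_
      rw [hUppSym p hp t ht i k, hUppSym p hp t ht i j]
      ring
    -- the θ-derivative part collapses to twice the neighbor sum
    have e2 : ∑ j, ∑ k ∈ mfgNbr n ω j,
          H j k (Real.sqrt (ω j k) * (Up k p t - Up j p t)) *
            ((if j = i then θ₁ (p i / π i) (p k / π k) / π i else 0)
              + (if k = i then θ₁ (p i / π i) (p j / π j) / π i else 0))
        = 2 * ∑ k ∈ mfgNbr n ω i,
            H i k (Real.sqrt (ω i k) * (Up k p t - Up i p t)) *
              (θ₁ (p i / π i) (p k / π k) / π i) := by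
      have hmul : ∀ j k : Fin n,
          H j k (Real.sqrt (ω j k) * (Up k p t - Up j p t)) *
            ((if j = i then θ₁ (p i / π i) (p k / π k) / π i else 0)
              + (if k = i then θ₁ (p i / π i) (p j / π j) / π i else 0))
          = (if j = i then H j k (Real.sqrt (ω j k) * (Up k p t - Up j p t)) *
                (θ₁ (p i / π i) (p k / π k) / π i) else 0)
            + (if k = i then H j k (Real.sqrt (ω j k) * (Up k p t - Up j p t)) *
                (θ₁ (p i / π i) (p j / π j) / π i) else 0) := by
        intro j k
        by_cases hji : j = i <;> by_cases hki : k = i <;> simp [hji, hki, mul_add]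
      calc ∑ j, ∑ k ∈ mfgNbr n ω j,
            H j k (Real.sqrt (ω j k) * (Up k p t - Up j p t)) *
              ((if j = i then θ₁ (p i / π i) (p k / π k) / π i else 0)
                + (if k = i then θ₁ (p i / π i) (p j / π j) / π i else 0))
          = (∑ j, ∑ k ∈ mfgNbr n ω j,
              (if j = i then H j k (Real.sqrt (ω j k) * (Up k p t - Up j p t)) *
                (θ₁ (p i / π i) (p k / π k) / π i) else 0))
            + ∑ j, ∑ k ∈ mfgNbr n ω j,
              (if k = i then H j k (Real.sqrt (ω j k) * (Up k p t - Up j p t)) *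
                (θ₁ (p i / π i) (p j / π j) / π i) else 0) := by
            rw [← Finset.sum_add_distrib]
            refine Finset.sum_congr rfl fun j _ => ?_
            rw [← Finset.sum_add_distrib]
            exact Finset.sum_congr rfl fun k _ => hmul j k
        _ = (∑ k ∈ mfgNbr n ω i,
              H i k (Real.sqrt (ω i k) * (Up k p t - Up i p t)) *
                (θ₁ (p i / π i) (p k / π k) / π i))
            + ∑ k ∈ mfgNbr n ω i,
              H i k (Real.sqrt (ω i k) * (Up k p t - Up i p t)) *
                (θ₁ (p i / π i) (p k / π k) / π i) := by
            congr 1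
            · rw [Finset.sum_eq_single i
                  (fun j _ hj => Finset.sum_eq_zero fun k _ => by simp [hj])
                  (fun h => absurd (Finset.mem_univ i) h)]
              exact Finset.sum_congr rfl fun k _ => by simp
            · -- second sum
              have hinner : ∀ j : Fin n, ∑ k ∈ mfgNbr n ω j,
                  (if k = i then H j k (Real.sqrt (ω j k) * (Up k p t - Up j p t)) *
                    (θ₁ (p i / π i) (p j / π j) / π i) else 0)
                  = if i ∈ mfgNbr n ω j then H j i (Real.sqrt (ω j i) * (Up i p t - Up j p t)) *
                    (θ₁ (p i / π i) (p j / π j) / π i) else 0 := fun j =>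
                Finset.sum_ite_eq' (mfgNbr n ω j) i _
              rw [Finset.sum_congr rfl fun j _ => hinner j]
              have hiff : ∀ j : Fin n, (i ∈ mfgNbr n ω j) ↔ (j ∈ mfgNbr n ω i) := by
                intro j
                simp only [mfgNbr, Finset.mem_filter, Finset.mem_univ, true_and]
                constructor
                · exact fun h => ⟨h.1.symm, (hωsym j i) ▸ h.2⟩
                · exact fun h => ⟨h.1.symm, (hωsym i j) ▸ h.2⟩
              have hval : ∀ j : Fin n, H j i (Real.sqrt (ω j i) * (Up i p t - Up j p t))
                  = H i j (Real.sqrt (ω i j) * (Up j p t - Up i p t)) := by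
                intro j
                rw [hHsym j i, hωsym j i,
                  show Real.sqrt (ω i j) * (Up i p t - Up j p t)
                    = -(Real.sqrt (ω i j) * (Up j p t - Up i p t)) by ring]
                exact hHeven i j _
              have : ∀ j : Fin n,
                  (if i ∈ mfgNbr n ω j then H j i (Real.sqrt (ω j i) * (Up i p t - Up j p t)) *
                    (θ₁ (p i / π i) (p j / π j) / π i) else 0)
                  = if j ∈ mfgNbr n ω i then H i j (Real.sqrt (ω i j) * (Up j p t - Up i p t)) *
                    (θ₁ (p i / π i) (p j / π j) / π i) else 0 := by
                intro j
                rw [hval j]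
                by_cases hj : j ∈ mfgNbr n ω i
                · rw [if_pos ((hiff j).mpr hj), if_pos hj]
                · rw [if_neg (fun h => hj ((hiff j).mp h)), if_neg hj]
              rw [Finset.sum_congr rfl fun j _ => this j]
              rw [Finset.sum_ite_mem, Finset.univ_inter]
        _ = 2 * ∑ k ∈ mfgNbr n ω i,
              H i k (Real.sqrt (ω i k) * (Up k p t - Up i p t)) *
                (θ₁ (p i / π i) (p k / π k) / π i) := by ring
    rw [e1, e2] at hkey
    linarith [hkey]
  · intro p hp i
    have hcont : Continuous fun y : ℝ => Function.update p i y :=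
      continuous_const.update i continuous_id
    have hmem : ∀ᶠ y in nhds (p i), Function.update p i y ∈ O := by
      refine hcont.continuousAt.eventually_mem ?_
      rw [Function.update_eq_self]; exact hO.mem_nhds hp
    have h1 := hUp p hp T le_rfl i
    have h2 : HasDerivAt (fun y => 𝒰 (Function.update p i y) T) (G' i p) (p i) :=
      (hG' p hp i).congr_of_eventuallyEq (hmem.mono fun y hy => hterm _ hy)
    exact h1.unique h2

end DiscreteMasterPotential
end

section
/- Mixed-strategy master equation on finite states: let u = (u_i) : O × (−∞, T] → ℝ^n be continuously differentiable and solve the discrete master equation ∂_t u_i(p,t) + ∑_{j∈N_i} H_{ij}((∇̄_ω u(p,t))_{i,j}) (∂θ_{ij}/∂p_i)(p) + F_i(p) + (1/2) ∑_{(j,k)∈E} H'_{jk}((∇̄_ω u(p,t))_{j,k}) √(ω_{jk}) (∂u_i/∂p_k − ∂u_i/∂p_j)(p,t) θ_{jk}(p) = 0 with u_i(p,T) = G_i(p). Define U(q, p, t) := ∑_{i=1}^n q_i u_i(p, t). Then (∂/∂q_i) U(q,p,t) = u_i(p,t), and U solves the mixed master equation ∂_t U(q,p,t) + ∑_{(i,j)∈E}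 H_{ij}( (∇̄_ω ∇_q U(q,p,t))_{i,j} ) q_i (∂θ_{ij}/∂p_i)(p) + ∑_{i=1}^n q_i F_i(p) + (1/2) ∑_{(i,j)∈E} H'_{ij}( (∇̄_ω ∇_q U(q,p,t))_{i,j} ) ( ∇̄_ω ∇_p U(q,p,t) )_{i,j} θ_{ij}(p) = 0 for t ≤ T, with U(q,p,T) = ∑_{i=1}^n q_i G_i(p). -/
open Finset

noncomputable section MixedMaster

/-- Mixed-strategy value function `U(q, p, t) = ∑ i, q i * u_i(p, t)`. -/
def mixedU (n : ℕ) (u : Fin n → (Fin n → ℝ) → ℝ → ℝ)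
    (q p : Fin n → ℝ) (t : ℝ) : ℝ :=
  ∑ i, q i * u i p t

lemma mfg_sum3comm {α : Type*} [Fintype α] (s : α → Finset α) (f : α → α → α → ℝ) :
    ∑ j, ∑ k ∈ s j, ∑ x, f x j k = ∑ x, ∑ j, ∑ k ∈ s j, f x j k :=
  calc ∑ j, ∑ k ∈ s j, ∑ x, f x j k
      = ∑ j, ∑ x, ∑ k ∈ s j, f x j k :=
        Finset.sum_congr rfl fun j _ => Finset.sum_comm
    _ = ∑ x, ∑ j, ∑ k ∈ s j, f x j k := Finset.sum_comm

/-- Mixed-strategy master equation on finite states: if `u` is a `C¹` solution of the discrete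
master equation, then `U(q,p,t) := ∑ i, q_i u_i(p,t)` satisfies `∂U/∂q_i = u_i`, its partial
derivatives in `p` and `t` are `∑ k, q_k ∂u_k/∂p_i` and `∑ k, q_k ∂_t u_k`, and `U` solves the
mixed master equation with terminal datum `∑ i, q_i G_i(p)`. -/
theorem mixed_master_equation
    (n : ℕ) (ω : Fin n → Fin n → ℝ)
    (O : Set (Fin n → ℝ)) (hO : IsOpen O)
    (θij : Fin n → Fin n → (Fin n → ℝ) → ℝ)
    -- `Dθ i j` is the partial derivative `∂θ_{ij}/∂p_i`
    (Dθ : Fin n → Fin n → (Fin n → ℝ) → ℝ)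
    (H H' : Fin n → Fin n → ℝ → ℝ)
    (F G : Fin n → (Fin n → ℝ) → ℝ)
    (T : ℝ)
    (u : Fin n → (Fin n → ℝ) → ℝ → ℝ)
    (ut : Fin n → (Fin n → ℝ) → ℝ → ℝ)
    (up : Fin n → Fin n → (Fin n → ℝ) → ℝ → ℝ)
    (hωsym : ∀ i j, ω i j = ω j i)
    (hωnonneg : ∀ i j, i ≠ j → 0 ≤ ω i j)
    (hθsym : ∀ i j p, θij i j p = θij j i p)
    (hθC1 : ∀ i j, ContDiffOn ℝ 1 (θij i j) O)
    (hDθ : ∀ i j, ∀ p ∈ O,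
      HasDerivAt (fun y => θij i j (Function.update p i y)) (Dθ i j p) (p i))
    (hH' : ∀ i j a, HasDerivAt (H i j) (H' i j a) a)
    (hHeven : ∀ i j a, H i j (-a) = H i j a)
    (hHsym : ∀ i j, H i j = H j i)
    (hFc : ∀ i, ContinuousOn (F i) O)
    (hGc : ∀ i, ContinuousOn (G i) O)
    -- `u` is `C¹` with partial derivatives `ut`, `up`
    (hut : ∀ i, ∀ p ∈ O, ∀ t ≤ T, HasDerivAt (fun r => u i p r) (ut i p t) t)
    (hup : ∀ i k, ∀ p ∈ O, ∀ t ≤ T,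
      HasDerivAt (fun y => u i (Function.update p k y) t) (up i k p t) (p k))
    -- `u` solves the discrete master equation with terminal datum `G`
    (hmaster : ∀ i, ∀ p ∈ O, ∀ t ≤ T,
      ut i p t
        + ∑ j ∈ mfgNbr n ω i,
            H i j (Real.sqrt (ω i j) * (u j p t - u i p t)) * Dθ i j p
        + F i p
        + (1/2) * ∑ j, ∑ k ∈ mfgNbr n ω j,
            H' j k (Real.sqrt (ω j k) * (u k p t - u j p t)) *
              Real.sqrt (ω j k) * (up i k p t - up i j p t) * θij j k p
        = 0)
    (huterm : ∀ i, ∀ p ∈ O, u i p T = G i p) :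
    ∀ (q : Fin n → ℝ), ∀ p ∈ O, ∀ t ≤ T,
      -- `∂U/∂q_i = u_i(p, t)`
      (∀ i, HasDerivAt (fun y => mixedU n u (Function.update q i y) p t)
        (u i p t) (q i)) ∧
      -- `∂U/∂p_i = ∑ k, q_k ∂u_k/∂p_i` and `∂U/∂t = ∑ k, q_k ∂_t u_k`
      (∀ i, HasDerivAt (fun y => mixedU n u q (Function.update p i y) t)
        (∑ k, q k * up k i p t) (p i)) ∧
      HasDerivAt (fun r => mixedU n u q p r) (∑ k, q k * ut k p t) t ∧
      -- `U` solves the mixed master equation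
      (∑ k, q k * ut k p t
        + ∑ i, ∑ j ∈ mfgNbr n ω i,
            H i j (Real.sqrt (ω i j) * (u j p t - u i p t)) * (q i * Dθ i j p)
        + ∑ i, q i * F i p
        + (1/2) * ∑ i, ∑ j ∈ mfgNbr n ω i,
            H' i j (Real.sqrt (ω i j) * (u j p t - u i p t)) *
              (Real.sqrt (ω i j) *
                ((∑ k, q k * up k j p t) - ∑ k, q k * up k i p t)) * θij i j p
        = 0) ∧
      -- terminal condition
      mixedU n u q p T = ∑ i, q i * G i p := by

  intro q p hp t ht
  refine ⟨?_, ?_, ?_, ?_, ?_⟩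
  · -- q-derivative
    intro i
    have h1 : HasDerivAt (fun y => mixedU n u (Function.update q i y) p t)
        (∑ j : Fin n, if j = i then u i p t else 0) (q i) := by
      unfold mixedU
      refine HasDerivAt.fun_sum fun j _ => ?_
      by_cases h : j = i
      · subst h
        simp only [Function.update_self, if_pos rfl]
        simpa using (hasDerivAt_id (q j)).mul_const (u j p t)
      · simp only [Function.update_of_ne h, if_neg h]
        exact hasDerivAt_const _ _
    simpa using h1
  · -- p-derivative
    intro i
    unfold mixedU
    exact HasDerivAt.fun_sum fun k _ => (hup k i p hp t ht).const_mul (q k)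
  · -- t-derivative
    unfold mixedU
    exact HasDerivAt.fun_sum fun k _ => (hut k p hp t ht).const_mul (q k)
  · -- mixed master equation
    have h0 : ∑ i, q i * (ut i p t
        + ∑ j ∈ mfgNbr n ω i,
            H i j (Real.sqrt (ω i j) * (u j p t - u i p t)) * Dθ i j p
        + F i p
        + (1/2) * ∑ j, ∑ k ∈ mfgNbr n ω j,
            H' j k (Real.sqrt (ω j k) * (u k p t - u j p t)) *
              Real.sqrt (ω j k) * (up i k p t - up i j p t) * θij j k p) = 0 := by
      refine Finset.sum_eq_zero fun i _ => ?_
      rw [hmaster i p hp t ht, mul_zero]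
    calc ∑ k, q k * ut k p t
        + ∑ i, ∑ j ∈ mfgNbr n ω i,
            H i j (Real.sqrt (ω i j) * (u j p t - u i p t)) * (q i * Dθ i j p)
        + ∑ i, q i * F i p
        + (1/2) * ∑ i, ∑ j ∈ mfgNbr n ω i,
            H' i j (Real.sqrt (ω i j) * (u j p t - u i p t)) *
              (Real.sqrt (ω i j) *
                ((∑ k, q k * up k j p t) - ∑ k, q k * up k i p t)) * θij i j p
        = ∑ i, q i * (ut i p t
        + ∑ j ∈ mfgNbr n ω i,
            H i j (Real.sqrt (ω i j) * (u j p t - u i p t)) * Dθ i j p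
        + F i p
        + (1/2) * ∑ j, ∑ k ∈ mfgNbr n ω j,
            H' j k (Real.sqrt (ω j k) * (u k p t - u j p t)) *
              Real.sqrt (ω j k) * (up i k p t - up i j p t) * θij j k p) := by
          simp only [mul_add, Finset.sum_add_distrib]
          congr 1
          · congr 1
            · congr 1
              refine Finset.sum_congr rfl fun i _ => ?_
              rw [Finset.mul_sum]
              exact Finset.sum_congr rfl fun j _ => by ring
          · -- D term
            symm
            calc ∑ x, q x * ((1:ℝ)/2 * ∑ j, ∑ k ∈ mfgNbr n ω j,
                    H' j k (Real.sqrt (ω j k) * (u k p t - u j p t)) *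
                      Real.sqrt (ω j k) * (up x k p t - up x j p t) * θij j k p)
                = ∑ j, ∑ k ∈ mfgNbr n ω j, ∑ x,
                    q x * ((1:ℝ)/2 *
                      (H' j k (Real.sqrt (ω j k) * (u k p t - u j p t)) *
                        Real.sqrt (ω j k) * (up x k p t - up x j p t) * θij j k p)) := by
                  rw [mfg_sum3comm]
                  refine Finset.sum_congr rfl fun x _ => ?_
                  simp only [Finset.mul_sum]
              _ = 1/2 * ∑ i, ∑ j ∈ mfgNbr n ω i,
                    H' i j (Real.sqrt (ω i j) * (u j p t - u i p t)) *
                      (Real.sqrt (ω i j) *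
                        ((∑ k, q k * up k j p t) - ∑ k, q k * up k i p t)) * θij i j p := by
                  rw [Finset.mul_sum]
                  refine Finset.sum_congr rfl fun j _ => ?_
                  rw [Finset.mul_sum]
                  refine Finset.sum_congr rfl fun k _ => ?_
                  simp only [mul_sub, sub_mul, Finset.mul_sum, Finset.sum_mul,
                    Finset.sum_sub_distrib]
                  congr 1 <;> exact Finset.sum_congr rfl fun x _ => by ring
      _ = 0 := h0
  · -- terminal condition
    unfold mixedU
    exact Finset.sum_congr rfl fun i _ => by rw [huterm i p hp]


end MixedMaster
end

section
/- The geometric mean activation function arises from the dissipation function ψ*(ξ) = 4 cosh(ξ/2) − 4: the function ψ*(ξ) = 4 cosh(ξ/2) − 4 is even, convex, and satisfies ψ*(0) = 0, and for all x, y > 0 it satisfies the defining relation (ψ*)'( log x − log y ) = (x − y) / θ(x,y) with θ(x,y) = √(xy). -/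
/-- The geometric mean activation function `θ(x,y) = √(xy)` arises from the dissipation
function `ψ*(ξ) = 4 cosh(ξ/2) − 4`: this `ψ*` is even, convex, vanishes at `0`, and satisfies
`(ψ*)'(log x − log y) = (x − y)/θ(x,y)` for all `x, y > 0`. -/
theorem geometric_mean_dissipation_function :
    (∀ ξ : ℝ, (fun ξ : ℝ => 4 * Real.cosh (ξ / 2) - 4) (-ξ)
      = (fun ξ : ℝ => 4 * Real.cosh (ξ / 2) - 4) ξ) ∧
    ConvexOn ℝ Set.univ (fun ξ : ℝ => 4 * Real.cosh (ξ / 2) - 4) ∧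
    (4 : ℝ) * Real.cosh (0 / 2) - 4 = 0 ∧
    (∀ x y : ℝ, 0 < x → 0 < y →
      deriv (fun ξ : ℝ => 4 * Real.cosh (ξ / 2) - 4) (Real.log x - Real.log y)
        = (x - y) / Real.sqrt (x * y)) := by
  refine ⟨?_, ?_, ?_, ?_⟩
  · intro ξ
    simp [neg_div, Real.cosh_neg]
  · have key : ∀ c : ℝ, ConvexOn ℝ Set.univ (fun ξ : ℝ => Real.exp (c * ξ)) := by
      intro c
      have := convexOn_exp.comp_affineMap ((c • (LinearMap.id : ℝ →ₗ[ℝ] ℝ)).toAffineMap)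
      simpa [Function.comp_def, Pi.smul_apply, smul_eq_mul] using this
    have h2 := (((key (1/2)).smul (by norm_num : (0:ℝ) ≤ 2)).add
      ((key (-(1/2))).smul (by norm_num : (0:ℝ) ≤ 2))).add
      (convexOn_const (-4 : ℝ) convex_univ)
    convert h2 using 1
    · rfl
    · rfl
    funext ξ
    have e1 : (1/2 : ℝ) * ξ = ξ/2 := by ring
    have e2 : (-(1/2) : ℝ) * ξ = -(ξ/2) := by ring
    simp only [Pi.add_apply, Pi.smul_apply, smul_eq_mul, e1, e2]
    rw [Real.cosh_eq]
    ring
  · simp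
  · intro x y hx hy
    have hd : deriv (fun ξ : ℝ => 4 * Real.cosh (ξ / 2) - 4) (Real.log x - Real.log y)
        = 2 * Real.sinh ((Real.log x - Real.log y) / 2) := by
      set t := Real.log x - Real.log y
      have h1 : HasDerivAt (fun ξ : ℝ => ξ / 2) (1 / 2) t := by
        simpa using (hasDerivAt_id t).div_const 2
      have h2 : HasDerivAt (fun ξ : ℝ => Real.cosh (ξ / 2))
          (Real.sinh (t / 2) * (1 / 2)) t := (Real.hasDerivAt_cosh (t / 2)).comp t h1 (h₂ := Real.cosh)
      have h3 := (h2.const_mul 4).sub_const 4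
      have := h3.deriv
      rw [this]; ring
    rw [hd]
    have hax : Real.sqrt x > 0 := Real.sqrt_pos.mpr hx
    have hay : Real.sqrt y > 0 := Real.sqrt_pos.mpr hy
    have hex : Real.exp ((Real.log x - Real.log y) / 2) = Real.sqrt x / Real.sqrt y := by
      rw [sub_div, Real.exp_sub, ← Real.log_sqrt hx.le, ← Real.log_sqrt hy.le,
        Real.exp_log hax, Real.exp_log hay]
    have hexn : Real.exp (-((Real.log x - Real.log y) / 2)) = Real.sqrt y / Real.sqrt x := by
      rw [Real.exp_neg, hex, inv_div]
    rw [Real.sinh_eq, hex, hexn, Real.sqrt_mul hx.le]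
    have hxx : Real.sqrt x * Real.sqrt x = x := Real.mul_self_sqrt hx.le
    have hyy : Real.sqrt y * Real.sqrt y = y := Real.mul_self_sqrt hy.le
    field_simp
    nlinarith [hxx, hyy]
end

section
/- Closed formula for the generalized discrete Wasserstein distance on the two-point space: let β > 1, h > 0, H₀ > 0, let p⁰ < p¹ be real numbers, and let θ : [p⁰, p¹] → (0, ∞) be continuous. Suppose x : [0,1] → [p⁰, p¹] is continuously differentiable with x(0) = p⁰, x(1) = p¹, and satisfies the first-order ODE dx_s/ds = h (β H₀)^{(β−1)/β} θ(x_s)^{1/β} for all s ∈ [0,1]. Then h β^{(β−1)/β} H₀^{(β−1)/β} = ∫_{p⁰}^{p¹} θ(x)^{−1/β} dx; equivalently, the Wasserstein-α distance W_α(p⁰, p¹) = β^{1/α} H₀^{1/α} (with 1/α + 1/β = 1) equals (1/h) ∫_{p⁰}^{p¹} θ(x)^{−1/β} dx. In particular, for β = 2 this gives the discrete Wasserstein-2 distance W(p⁰,p¹) = √(2H₀) = (1/h) ∫_{p⁰}^{p¹} θ(x)^{−1/2} dx. -/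
/-- Closed formula for the generalized discrete Wasserstein distance on the two-point space:
if `x : [0,1] → [p⁰, p¹]` is a `C¹` solution of `dx/ds = h (β H₀)^((β−1)/β) θ(x_s)^(1/β)` with
`x(0) = p⁰`, `x(1) = p¹`, then `h β^((β−1)/β) H₀^((β−1)/β) = ∫_{p⁰}^{p¹} θ(x)^(−1/β) dx`;
equivalently `W_α(p⁰,p¹) = β^(1/α) H₀^(1/α) = (1/h) ∫_{p⁰}^{p¹} θ(x)^(−1/β) dx` (with
`1/α + 1/β = 1`), and for `β = 2` this gives `√(2H₀) = (1/h) ∫_{p⁰}^{p¹} θ(x)^(−1/2) dx`. -/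
theorem two_point_generalized_wasserstein_formula
    (β h H0 p0 p1 α : ℝ)
    (hβ : 1 < β) (hh : 0 < h) (hH0 : 0 < H0) (hp : p0 < p1)
    (hα : 1 / α + 1 / β = 1)
    (θ : ℝ → ℝ)
    (hθc : ContinuousOn θ (Set.Icc p0 p1))
    (hθpos : ∀ y ∈ Set.Icc p0 p1, 0 < θ y)
    (x : ℝ → ℝ)
    (hx0 : x 0 = p0) (hx1 : x 1 = p1)
    (hxrange : ∀ s ∈ Set.Icc (0 : ℝ) 1, x s ∈ Set.Icc p0 p1)
    (hode : ∀ s ∈ Set.Icc (0 : ℝ) 1,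
      HasDerivAt x (h * (β * H0) ^ ((β - 1) / β) * θ (x s) ^ ((1 : ℝ) / β)) s) :
    h * β ^ ((β - 1) / β) * H0 ^ ((β - 1) / β)
        = ∫ y in p0..p1, θ y ^ (-(1 : ℝ) / β) ∧
    β ^ (1 / α) * H0 ^ (1 / α) = (1 / h) * ∫ y in p0..p1, θ y ^ (-(1 : ℝ) / β) ∧
    (β = 2 → Real.sqrt (2 * H0) = (1 / h) * ∫ y in p0..p1, θ y ^ (-(1 : ℝ) / 2)) := by
  have hβ0 : (0 : ℝ) < β := lt_trans one_pos hβ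
  have hβne : β ≠ 0 := ne_of_gt hβ0
  set C : ℝ := h * (β * H0) ^ ((β - 1) / β) with hC
  have huIcc : Set.uIcc (0 : ℝ) 1 = Set.Icc 0 1 := Set.uIcc_of_le zero_le_one
  have himg : x '' Set.uIcc (0 : ℝ) 1 ⊆ Set.Icc p0 p1 := by
    rw [huIcc]
    rintro _ ⟨s, hs, rfl⟩
    exact hxrange s hs
  -- continuity of x on [0,1]
  have hxc : ContinuousOn x (Set.Icc (0 : ℝ) 1) :=
    fun s hs => (hode s hs).continuousAt.continuousWithinAt
  -- the change of variables
  have hd' : ContinuousOn (fun s => C * θ (x s) ^ ((1 : ℝ) / β)) (Set.uIcc (0:ℝ) 1) := by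
    rw [huIcc]
    exact continuousOn_const.mul
      ((hθc.comp hxc fun s hs => hxrange s hs).rpow_const
        fun s hs => Or.inl (ne_of_gt (hθpos _ (hxrange s hs))))
  have hg' : ContinuousOn (fun y => θ y ^ (-(1 : ℝ) / β)) (x '' Set.uIcc (0:ℝ) 1) :=
    (hθc.mono himg).rpow_const fun y hy => Or.inl (ne_of_gt (hθpos _ (himg hy)))
  have hkey : (∫ y in p0..p1, θ y ^ (-(1 : ℝ) / β)) = C := by
    have hcv := intervalIntegral.integral_comp_smul_deriv'
      (a := (0:ℝ)) (b := 1)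
      (f := x) (f' := fun s => C * θ (x s) ^ ((1 : ℝ) / β))
      (g := fun y => θ y ^ (-(1 : ℝ) / β))
      (fun s hs => by rw [huIcc] at hs; exact hode s hs)
      hd' hg'
    rw [hx0, hx1] at hcv
    rw [← hcv]
    refine Eq.trans (intervalIntegral.integral_congr (g := fun _ => C) ?_) (by simp)
    intro s hs
    rw [huIcc] at hs
    have hpos := hθpos _ (hxrange s hs)
    simp only [Function.comp_apply, smul_eq_mul]
    rw [mul_assoc, ← Real.rpow_add hpos,
      show (1:ℝ)/β + -1/β = 0 by ring, Real.rpow_zero, mul_one]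
  have hsplit : (β * H0) ^ ((β - 1) / β) = β ^ ((β - 1) / β) * H0 ^ ((β - 1) / β) :=
    Real.mul_rpow (le_of_lt hβ0) (le_of_lt hH0)
  have h1 : h * β ^ ((β - 1) / β) * H0 ^ ((β - 1) / β)
      = ∫ y in p0..p1, θ y ^ (-(1 : ℝ) / β) := by
    rw [hkey, hC, hsplit]; ring
  refine ⟨h1, ?_, ?_⟩
  · have hαβ : 1 / α = (β - 1) / β := by
      field_simp at hα ⊢
      linarith
    rw [hαβ, ← h1]
    field_simp
  · intro hβ2
    subst hβ2
    have hαβ : 1 / α = (2 - 1) / 2 := by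
      field_simp at hα ⊢
      linarith
    have h2 : (2:ℝ) ^ ((2 - 1) / 2 : ℝ) * H0 ^ ((2 - 1) / 2 : ℝ) = Real.sqrt (2 * H0) := by
      rw [Real.sqrt_eq_rpow, Real.mul_rpow (by norm_num) (le_of_lt hH0)]
      norm_num
    rw [← h2, ← h1]
    have : -(1:ℝ) / 2 = -(1:ℝ) / 2 := rfl
    field_simp
end
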